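/- arXiv:2411.00216 — 6 statements merged into one kernel-verified Lean document; each statement's English description precedes it below -/
import Mathlib

section
/- Let G be a connected unweighted graph that admits an (a,b,1)-contraction sequence, with integers a, b ≥ 1, in which every round contracts at least one subgraph (a_i ≥ 1 for every i ∈ {1,…,b}). If Z is a set of vertices of G whose pairwise hop distances all exceed 18b, then |Z| ≤ a/b. -/
/-!
Fix `z` and a vertex set `B` not containing all of `G`. In the round-`i` quotient, measure how
far the part of `z` is from a part leaving `B`. In the last quotient this is `0`. Undoing round
`i + 1` costs at most `2 · #(contracted parts inside B) + 2` extra steps: take a shortest escape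
path, which visits distinct parts lying in `B` until its last one; each contracted part on it
has radius one, so it expands into at most two steps. In the first quotient, which is `G`
itself, the distance is therefore at most `∑ᵢ (2 · #(round-i contracted parts inside B) + 2)`.
For `B` the ball of radius `9b` around `z` this forces at least `b` contracted parts inside it;
balls around the points of `Z` are disjoint, so `b · |Z| ≤ a`.
-/
open scoped BigOperators

noncomputable section

namespace Paper

variable {V : Type}

def IsPartition (Ps : Set (Set V)) : Prop :=
  (∀ v : V, ∃ P ∈ Ps, v ∈ P) ∧
  (∀ P ∈ Ps, ∀ Q ∈ Ps, P ≠ Q → Disjoint P Q) ∧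
  (∀ P ∈ Ps, P.Nonempty)

def quotGraph (G : SimpleGraph V) (Ps : Set (Set V)) : SimpleGraph {D // D ∈ Ps} where
  Adj P Q := P ≠ Q ∧ ∃ u ∈ P.1, ∃ v ∈ Q.1, G.Adj u v
  symm := by
    constructor
    rintro P Q ⟨hne, u, hu, x, hx, hadj⟩
    exact ⟨hne.symm, x, hx, u, hu, hadj.symm⟩
  loopless := by
    constructor
    rintro P ⟨hne, -⟩
    exact hne rfl

structure ContractionSeq [Fintype V] (G : SimpleGraph V) (a b c : ℕ) where
  Ps : ℕ → Set (Set V)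
  con : ℕ → Set (Set V)
  ispart : ∀ i ≤ b, IsPartition (Ps i)
  bot : Ps 0 = {P | ∃ v : V, P = {v}}
  top : Ps b = {Set.univ}
  refines : ∀ i < b, ∀ P ∈ Ps i, ∃ Q ∈ Ps (i + 1), P ⊆ Q
  con_sub : ∀ i < b, con (i + 1) ⊆ Ps (i + 1)
  old_parts : ∀ i < b, ∀ P ∈ Ps (i + 1), P ∉ con (i + 1) → P ∈ Ps i
  contracted : ∀ i < b, ∀ P ∈ con (i + 1),
    ∃ D₀ : Set V, ∃ h₀ : D₀ ∈ ({D | D ∈ Ps i ∧ D ⊆ P} : Set (Set V)),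
      ∀ D : Set V, ∀ hD : D ∈ ({D | D ∈ Ps i ∧ D ⊆ P} : Set (Set V)),
        ∃ wlk : (quotGraph G {D | D ∈ Ps i ∧ D ⊆ P}).Walk ⟨D₀, h₀⟩ ⟨D, hD⟩,
          wlk.length ≤ c
  count : ∑ i ∈ Finset.range b, (con (i + 1)).ncard ≤ a

open scoped Classical

namespace IsPartition

variable {Ps : Set (Set V)}

lemma eq_of_mem (h : IsPartition Ps) {P Q : Set V} {v : V} (hP : P ∈ Ps) (hQ : Q ∈ Ps)
    (hvP : v ∈ P) (hvQ : v ∈ Q) : P = Q := by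
  by_contra hne
  exact Set.disjoint_left.mp (h.2.1 P hP Q hQ hne) hvP hvQ

lemma eq_of_subset (h : IsPartition Ps) {P Q : Set V} (hP : P ∈ Ps) (hQ : Q ∈ Ps)
    (hPQ : P ⊆ Q) : P = Q := by
  obtain ⟨v, hv⟩ := h.2.2 P hP
  exact h.eq_of_mem hP hQ hv (hPQ hv)

end IsPartition

section Quotient

variable {G : SimpleGraph V} {Ps : Set (Set V)}

def quotGraphHomOfSubset {S T : Set (Set V)} (hST : S ⊆ T) : quotGraph G S →g quotGraph G T where
  toFun := Set.inclusion hST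
  map_rel' := fun ⟨hne, h⟩ => ⟨(Set.inclusion_injective hST).ne hne, h⟩

@[simp]
lemma coe_quotGraphHomOfSubset_apply {S T : Set (Set V)} (hST : S ⊆ T) (P : {D // D ∈ S}) :
    (quotGraphHomOfSubset (G := G) hST P).1 = P.1 :=
  rfl

lemma exists_walk_quotGraph_of_adj {X Y : {D // D ∈ Ps}} {u v : V} (hu : u ∈ X.1)
    (hv : v ∈ Y.1) (huv : G.Adj u v) : ∃ p : (quotGraph G Ps).Walk X Y, p.length ≤ 1 := by
  by_cases hXY : X = Y
  · subst hXY
    exact ⟨.nil, zero_le_one⟩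
  · exact ⟨.cons ⟨hXY, u, hu, v, hv, huv⟩ .nil, le_rfl⟩

lemma exists_walk_of_walk_quotGraph (hPs : ∀ P ∈ Ps, P.Subsingleton) {X Y : {D // D ∈ Ps}}
    (p : (quotGraph G Ps).Walk X Y) {x y : V} (hx : x ∈ X.1) (hy : y ∈ Y.1) :
    ∃ q : G.Walk x y, q.length = p.length := by
  induction p generalizing x with
  | nil =>
    obtain rfl := hPs _ (Subtype.prop _) hx hy
    exact ⟨.nil, rfl⟩
  | cons h p ih =>
    obtain ⟨u, hu, v, hv, huv⟩ := h.2
    obtain rfl := hPs _ (Subtype.prop _) hx hu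
    obtain ⟨q, hq⟩ := ih hv hy
    exact ⟨.cons huv q, by rw [SimpleGraph.Walk.length_cons, SimpleGraph.Walk.length_cons, hq]⟩

lemma countP_le_ncard_add_one [Finite V] {C : Set (Set V)} {B : Set V} {Q : {D // D ∈ Ps}}
    {l : List {D // D ∈ Ps}} (hl : l.Nodup) (hB : ∀ R ∈ l, R ≠ Q → R.1 ⊆ B) :
    l.countP (fun R => R.1 ∈ C) ≤ (C ∩ {D | D ⊆ B}).ncard + 1 := by
  set l' := (l.filter (fun R => R.1 ∈ C)).map Subtype.val
  have hl' : l'.Nodup := (hl.filter _).map Subtype.val_injective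
  have hsub : (l'.toFinset : Set (Set V)) ⊆ insert Q.1 (C ∩ {D | D ⊆ B}) := by
    intro D hD
    simp only [l', Finset.mem_coe, List.mem_toFinset, List.mem_map, List.mem_filter,
      decide_eq_true_eq] at hD
    obtain ⟨R, ⟨hRl, hRC⟩, rfl⟩ := hD
    by_cases hRQ : R = Q
    · exact Or.inl (congrArg Subtype.val hRQ)
    · exact Or.inr ⟨hRC, hB R hRl hRQ⟩
  calc l.countP (fun R => R.1 ∈ C) = (l'.toFinset : Set (Set V)).ncard := by
        rw [Set.ncard_coe_finset, List.toFinset_card_of_nodup hl', List.length_map,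
          List.countP_eq_length_filter]
    _ ≤ (insert Q.1 (C ∩ {D | D ⊆ B})).ncard := Set.ncard_le_ncard hsub (Set.toFinite _)
    _ ≤ (C ∩ {D | D ⊆ B}).ncard + 1 := Set.ncard_insert_le _ _

def EscapesWithin (G : SimpleGraph V) (Ps : Set (Set V)) (z : V) (B : Set V) (m : ℕ) : Prop :=
  ∃ P Q : {D // D ∈ Ps}, z ∈ P.1 ∧ ¬ Q.1 ⊆ B ∧ ∃ p : (quotGraph G Ps).Walk P Q, p.length ≤ m

lemma escapesWithin_zero_of_univ_mem (hPs : Set.univ ∈ Ps) (z : V) {B : Set V}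
    (hB : ¬ Set.univ ⊆ B) : EscapesWithin G Ps z B 0 :=
  ⟨⟨_, hPs⟩, ⟨_, hPs⟩, Set.mem_univ z, hB, .nil, le_rfl⟩

lemma EscapesWithin.exists_walk (hPs : ∀ P ∈ Ps, P.Subsingleton) {z : V} {B : Set V} {m : ℕ}
    (h : EscapesWithin G Ps z B m) : ∃ u ∉ B, ∃ q : G.Walk z u, q.length ≤ m := by
  obtain ⟨P, Q, hzP, hQB, p, hp⟩ := h
  obtain ⟨u, huQ, huB⟩ := Set.not_subset.mp hQB
  obtain ⟨q, hq⟩ := exists_walk_of_walk_quotGraph hPs p hzP huQ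
  exact ⟨u, huB, q, hq ▸ hp⟩

end Quotient

lemma sum_ncard_le_ncard_of_pairwiseDisjoint {ι α : Type*} [Finite α] (t : Finset ι)
    {s : ι → Set α} {S : Set α} (hsub : ∀ i ∈ t, s i ⊆ S)
    (hdisj : (t : Set ι).PairwiseDisjoint s) : ∑ i ∈ t, (s i).ncard ≤ S.ncard := by
  rw [← finsum_mem_coe_finset,
    ← t.finite_toSet.ncard_biUnion (fun _ _ => Set.toFinite _) hdisj]
  exact Set.ncard_le_ncard (Set.iUnion₂_subset hsub) (Set.toFinite _)

def hopBall (G : SimpleGraph V) (z : V) (r : ℕ) : Set V := {u | ∃ p : G.Walk z u, p.length ≤ r}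

lemma disjoint_hopBall {G : SimpleGraph V} {z z' : V} {r : ℕ}
    (h : ∀ p : G.Walk z z', 2 * r < p.length) : Disjoint (hopBall G z r) (hopBall G z' r) := by
  rw [Set.disjoint_left]
  rintro u ⟨p, hp⟩ ⟨q, hq⟩
  have := h (p.append q.reverse)
  rw [SimpleGraph.Walk.length_append, SimpleGraph.Walk.length_reverse] at this
  omega

namespace ContractionSeq

variable [Fintype V] {G : SimpleGraph V} {a b : ℕ} (cs : ContractionSeq G a b 1) {i : ℕ}

lemma exists_part_subset (hi : i < b) {P : Set V} (hP : P ∈ cs.Ps (i + 1)) {u : V}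
    (hu : u ∈ P) : ∃ U ∈ cs.Ps i, u ∈ U ∧ U ⊆ P := by
  obtain ⟨U, hU, huU⟩ := (cs.ispart i hi.le).1 u
  obtain ⟨P', hP', hUP'⟩ := cs.refines i hi U hU
  obtain rfl := (cs.ispart (i + 1) hi).eq_of_mem hP' hP (hUP' huU) hu
  exact ⟨U, hU, huU, hUP'⟩

lemma exists_walk_of_subset_part (hi : i < b) {P : Set V} (hP : P ∈ cs.Ps (i + 1))
    {X Y : {D // D ∈ cs.Ps i}} (hX : X.1 ⊆ P) (hY : Y.1 ⊆ P) :
    ∃ p : (quotGraph G (cs.Ps i)).Walk X Y,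
      p.length ≤ 2 * if P ∈ cs.con (i + 1) then 1 else 0 := by
  split_ifs with hc
  · obtain ⟨D₀, h₀, hstar⟩ := cs.contracted i hi P hc
    obtain ⟨p, hp⟩ := hstar X.1 ⟨X.2, hX⟩
    obtain ⟨q, hq⟩ := hstar Y.1 ⟨Y.2, hY⟩
    let f := quotGraphHomOfSubset (G := G) (fun _ (hD : _ ∈ {D | D ∈ cs.Ps i ∧ D ⊆ P}) => hD.1)
    refine ⟨((p.map f).reverse.append (q.map f)).copy
      (Subtype.ext (coe_quotGraphHomOfSubset_apply _ _))
      (Subtype.ext (coe_quotGraphHomOfSubset_apply _ _)), ?_⟩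
    simp only [SimpleGraph.Walk.length_copy, SimpleGraph.Walk.length_append,
      SimpleGraph.Walk.length_reverse, SimpleGraph.Walk.length_map]
    omega
  · have hPi := cs.old_parts i hi P hP hc
    have hXP := (cs.ispart i hi.le).eq_of_subset X.2 hPi hX
    have hYP := (cs.ispart i hi.le).eq_of_subset Y.2 hPi hY
    obtain rfl : X = Y := Subtype.ext (hXP.trans hYP.symm)
    exact ⟨.nil, le_rfl⟩

lemma exists_walk_lift (hi : i < b) {P Q : {D // D ∈ cs.Ps (i + 1)}}
    (p : (quotGraph G (cs.Ps (i + 1))).Walk P Q) {X Y : {D // D ∈ cs.Ps i}} (hX : X.1 ⊆ P.1)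
    (hY : Y.1 ⊆ Q.1) :
    ∃ r : (quotGraph G (cs.Ps i)).Walk X Y,
      r.length ≤ p.length + 2 * p.support.countP (fun R => R.1 ∈ cs.con (i + 1)) := by
  induction p generalizing X with
  | @nil P =>
    obtain ⟨r, hr⟩ := cs.exists_walk_of_subset_part hi P.2 hX hY
    refine ⟨r, hr.trans ?_⟩
    simp [List.countP_cons]
  | @cons P P' Q h p ih =>
    obtain ⟨u, hu, v, hv, huv⟩ := h.2
    obtain ⟨U, hU, huU, hUP⟩ := cs.exists_part_subset hi P.2 hu
    obtain ⟨W, hW, hvW, hWP'⟩ := cs.exists_part_subset hi P'.2 hv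
    obtain ⟨r₁, hr₁⟩ := cs.exists_walk_of_subset_part hi P.2 hX (Y := ⟨U, hU⟩) hUP
    obtain ⟨r₂, hr₂⟩ := exists_walk_quotGraph_of_adj (X := ⟨U, hU⟩) (Y := ⟨W, hW⟩) huU hvW huv
    obtain ⟨r₃, hr₃⟩ := ih (X := ⟨W, hW⟩) hWP' hY
    refine ⟨r₁.append (r₂.append r₃), ?_⟩
    simp only [SimpleGraph.Walk.length_append, SimpleGraph.Walk.length_cons,
      SimpleGraph.Walk.support_cons, List.countP_cons, decide_eq_true_eq] at hr₁ ⊢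
    split_ifs at hr₁ ⊢ <;> omega

lemma escapesWithin_of_succ (hi : i < b) {z : V} {B : Set V} {m : ℕ}
    (hesc : EscapesWithin G (cs.Ps (i + 1)) z B m) :
    EscapesWithin G (cs.Ps i) z B (m + (2 * (cs.con (i + 1) ∩ {D | D ⊆ B}).ncard + 2)) := by
  have hex : ∃ m, EscapesWithin G (cs.Ps (i + 1)) z B m := ⟨m, hesc⟩
  obtain ⟨P, Q, hzP, hQB, p, hp⟩ := Nat.find_spec hex
  -- A shortest escape walk can be taken to be a path that stays inside `B` until its last part.
  obtain ⟨q, hq_path, hq⟩ : ∃ q : (quotGraph G (cs.Ps (i + 1))).Walk P Q,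
      q.IsPath ∧ q.length ≤ Nat.find hex :=
    ⟨p.bypass, p.bypass_isPath, p.length_bypass_le_length.trans hp⟩
  have hq_inside : ∀ R ∈ q.support, R ≠ Q → R.1 ⊆ B := by
    intro R hR hRQ
    by_contra hRB
    exact Nat.find_min hex ((q.length_takeUntil_lt_length hR hRQ).trans_le hq)
      ⟨P, R, hzP, hRB, q.takeUntil R hR, le_rfl⟩
  obtain ⟨X, hX, hzX, hXP⟩ := cs.exists_part_subset hi P.2 hzP
  obtain ⟨u, huQ, huB⟩ := Set.not_subset.mp hQB
  obtain ⟨Y, hY, huY, hYQ⟩ := cs.exists_part_subset hi Q.2 huQ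
  obtain ⟨r, hr⟩ := cs.exists_walk_lift hi q (X := ⟨X, hX⟩) (Y := ⟨Y, hY⟩) hXP hYQ
  refine ⟨⟨X, hX⟩, ⟨Y, hY⟩, hzX, fun hYB => huB (hYB huY), r, ?_⟩
  have hcount := countP_le_ncard_add_one (C := cs.con (i + 1)) hq_path.support_nodup hq_inside
  have hm := Nat.find_le (h := hex) hesc
  omega

lemma escapesWithin_of_le (z : V) {B : Set V} (hB : ¬ Set.univ ⊆ B) (hi : i ≤ b) :
    EscapesWithin G (cs.Ps i) z B
      (∑ t ∈ Finset.Ico i b, (2 * (cs.con (t + 1) ∩ {D | D ⊆ B}).ncard + 2)) := by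
  induction hi using Nat.decreasingInduction with
  | self =>
    rw [Finset.Ico_self, Finset.sum_empty]
    exact escapesWithin_zero_of_univ_mem (by rw [cs.top]; rfl) z hB
  | of_succ k hk ih =>
    rw [Finset.sum_eq_sum_Ico_succ_bot hk, add_comm]
    exact cs.escapesWithin_of_succ hk ih

lemma exists_walk_not_mem (z : V) {B : Set V} (hB : ¬ Set.univ ⊆ B) :
    ∃ u ∉ B, ∃ q : G.Walk z u,
      q.length ≤ ∑ t ∈ Finset.range b, (2 * (cs.con (t + 1) ∩ {D | D ⊆ B}).ncard + 2) := by
  rw [Finset.range_eq_Ico]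
  refine (cs.escapesWithin_of_le z hB (Nat.zero_le b)).exists_walk ?_
  rw [cs.bot]
  rintro _ ⟨v, rfl⟩
  exact Set.subsingleton_singleton

lemma le_sum_ncard_con (hpos : ∀ i < b, (cs.con (i + 1)).Nonempty) :
    b ≤ ∑ t ∈ Finset.range b, (cs.con (t + 1)).ncard :=
  calc b = ∑ _t ∈ Finset.range b, 1 := by simp
    _ ≤ ∑ t ∈ Finset.range b, (cs.con (t + 1)).ncard := Finset.sum_le_sum fun t ht =>
        (Set.ncard_pos (Set.toFinite _)).mpr (hpos t (Finset.mem_range.mp ht))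

lemma le_sum_ncard_con_subset_hopBall {z : V} (hz : ¬ Set.univ ⊆ hopBall G z (9 * b)) :
    b ≤ ∑ t ∈ Finset.range b, (cs.con (t + 1) ∩ {D | D ⊆ hopBall G z (9 * b)}).ncard := by
  obtain ⟨u, hu, q, hq⟩ := cs.exists_walk_not_mem z hz
  have hlt : 9 * b < ∑ t ∈ Finset.range b,
      (2 * (cs.con (t + 1) ∩ {D | D ⊆ hopBall G z (9 * b)}).ncard + 2) := by
    by_contra! hle
    exact hu ⟨q, hq.trans hle⟩
  rw [Finset.sum_add_distrib, ← Finset.mul_sum, Finset.sum_const, Finset.card_range,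
    smul_eq_mul] at hlt
  omega

lemma mul_ncard_le_of_separated {Z : Set V} (hZ₂ : 1 < Z.ncard)
    (hZ : ∀ u ∈ Z, ∀ v ∈ Z, u ≠ v → ∀ p : G.Walk u v, 18 * b < p.length) :
    b * Z.ncard ≤ ∑ t ∈ Finset.range b, (cs.con (t + 1)).ncard := by
  obtain ⟨Zf, rfl⟩ := (Set.toFinite Z).exists_finset_coe
  let N t z := (cs.con (t + 1) ∩ {D | D ⊆ hopBall G z (9 * b)}).ncard
  have hsep : ∀ z ∈ Zf, ∀ z' ∈ Zf, z ≠ z' →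
      Disjoint (hopBall G z (9 * b)) (hopBall G z' (9 * b)) :=
    fun z hz z' hz' hne => disjoint_hopBall fun p => by
      have := hZ z hz z' hz' hne p
      omega
  have hcharge : ∀ z ∈ Zf, b ≤ ∑ t ∈ Finset.range b, N t z := by
    intro z hz
    obtain ⟨z', hz', hne⟩ := Set.exists_ne_of_one_lt_ncard hZ₂ z
    refine cs.le_sum_ncard_con_subset_hopBall fun hall => ?_
    exact Set.disjoint_left.mp (hsep z hz z' hz' hne.symm) (hall (Set.mem_univ z'))
      ⟨.nil, Nat.zero_le _⟩
  calc b * (Zf : Set V).ncard = ∑ _z ∈ Zf, b := by simp [mul_comm]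
    _ ≤ ∑ z ∈ Zf, ∑ t ∈ Finset.range b, N t z := Finset.sum_le_sum hcharge
    _ = ∑ t ∈ Finset.range b, ∑ z ∈ Zf, N t z := Finset.sum_comm
    _ ≤ ∑ t ∈ Finset.range b, (cs.con (t + 1)).ncard := by
        refine Finset.sum_le_sum fun t ht => sum_ncard_le_ncard_of_pairwiseDisjoint _
          (fun _ _ => Set.inter_subset_left) ?_
        rintro z hz z' hz' hne
        refine Set.disjoint_left.mpr fun D ⟨hDC, hDz⟩ ⟨_, hDz'⟩ => ?_
        obtain ⟨w, hw⟩ := (cs.ispart (t + 1) (Finset.mem_range.mp ht)).2.2 D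
          (cs.con_sub t (Finset.mem_range.mp ht) hDC)
        exact Set.disjoint_left.mp (hsep z hz z' hz' hne) (hDz hw) (hDz' hw)

end ContractionSeq

theorem statement_7_general {V : Type} [Fintype V] (G : SimpleGraph V)
    (a b : ℕ) (hb : 1 ≤ b)
    (cs : ContractionSeq G a b 1)
    (hpos : ∀ i < b, (cs.con (i + 1)).Nonempty)
    (Z : Set V)
    (hZ : ∀ u ∈ Z, ∀ v ∈ Z, u ≠ v → ∀ p : G.Walk u v, 18 * b < p.length) :
    (Z.ncard : ℝ) ≤ (a : ℝ) / b := by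
  have hab : b * Z.ncard ≤ a := by
    refine le_trans ?_ cs.count
    rcases le_or_gt Z.ncard 1 with hZ₁ | hZ₂
    · calc b * Z.ncard ≤ b * 1 := Nat.mul_le_mul_left b hZ₁
        _ = b := mul_one b
        _ ≤ _ := cs.le_sum_ncard_con hpos
    · exact cs.mul_ncard_le_of_separated hZ₂ hZ
  rw [le_div_iff₀ (by exact_mod_cast hb), mul_comm]
  exact_mod_cast hab

/-- Let `G` be a connected unweighted graph admitting an
`(a,b,1)`-contraction sequence (`a, b ≥ 1`) in which every round contracts at least one
subgraph. If `Z` is a set of vertices whose pairwise hop distances all exceed `18·b`,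
then `|Z| ≤ a / b`. -/
theorem statement_7 {V : Type} [Fintype V] (G : SimpleGraph V) (hG : G.Connected)
    (a b : ℕ) (ha : 1 ≤ a) (hb : 1 ≤ b)
    (cs : ContractionSeq G a b 1)
    (hpos : ∀ i < b, (cs.con (i + 1)).Nonempty)
    (Z : Set V)
    (hZ : ∀ u ∈ Z, ∀ v ∈ Z, u ≠ v → ∀ p : G.Walk u v, 18 * b < p.length) :
    (Z.ncard : ℝ) ≤ (a : ℝ) / b :=
  statement_7_general G a b hb cs hpos Z hZ

end Paper
end
end

section
/- If a connected unweighted graph H admits an (a,b,1)-contraction sequence (that is, H can be turned into a one-vertex graph by a total of at most a contractions of connected subgraphs of radius at most 1, performed in b rounds of pairwise vertex-disjoint contractions), then the hop-diameter of H is at most 2a. -/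
/-
By induction over the rounds, two vertices of a part `P` of the `i`-th partition are joined by a
walk of length at most twice the number of contractions performed inside `P` so far. A contraction
of radius 1 merges a centre part `D₀` with parts adjacent to it, so two vertices in distinct old
parts `Du`, `Dv` are joined through `D₀` by a walk using the walks inside `Du`, `D₀`, `Dv` and two
new edges; the new contraction pays for those two edges. In the last round `P` is the whole
vertex set.
-/

open scoped BigOperators

noncomputable section

namespace Paper

variable {V : Type}

def JoinedWithin (G : SimpleGraph V) (P : Set V) (n : ℕ) : Prop :=
  ∀ u ∈ P, ∀ v ∈ P, ∃ p : G.Walk u v, p.length ≤ n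

lemma JoinedWithin.mono {G : SimpleGraph V} {P : Set V} {m n : ℕ} (h : JoinedWithin G P m)
    (hmn : m ≤ n) : JoinedWithin G P n := fun u hu v hv =>
  (h u hu v hv).imp fun _ hp => hp.trans hmn

lemma joinedWithin_singleton (G : SimpleGraph V) (v : V) (n : ℕ) : JoinedWithin G {v} n := by
  rintro u rfl w rfl
  exact ⟨.nil, Nat.zero_le n⟩

-- Counting only nonempty parts makes the count superadditive on disjoint sets.
def contractionCount (con : ℕ → Set (Set V)) (i : ℕ) (P : Set V) : ℕ :=
  ∑ j ∈ Finset.range i, {C ∈ con (j + 1) | C.Nonempty ∧ C ⊆ P}.ncard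

lemma contractionCount_succ (con : ℕ → Set (Set V)) (i : ℕ) (P : Set V) :
    contractionCount con (i + 1) P =
      contractionCount con i P + {C ∈ con (i + 1) | C.Nonempty ∧ C ⊆ P}.ncard :=
  Finset.sum_range_succ _ _

section contractionCount

variable [Finite V] {con : ℕ → Set (Set V)} {i : ℕ} {A B C P : Set V}

lemma contractionCount_mono (h : A ⊆ B) : contractionCount con i A ≤ contractionCount con i B :=
  Finset.sum_le_sum fun _ _ => Set.ncard_le_ncard fun _ hC => ⟨hC.1, hC.2.1, hC.2.2.trans h⟩

lemma contractionCount_add_le_union (h : Disjoint A B) :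
    contractionCount con i A + contractionCount con i B ≤ contractionCount con i (A ∪ B) := by
  rw [contractionCount, contractionCount, ← Finset.sum_add_distrib]
  refine Finset.sum_le_sum fun j _ => ?_
  have hdisj : Disjoint {C ∈ con (j + 1) | C.Nonempty ∧ C ⊆ A}
      {C ∈ con (j + 1) | C.Nonempty ∧ C ⊆ B} := by
    rw [Set.disjoint_left]
    rintro C ⟨-, ⟨x, hx⟩, hCA⟩ ⟨-, -, hCB⟩
    exact Set.disjoint_left.mp h (hCA hx) (hCB hx)
  rw [← Set.ncard_union_eq hdisj]
  refine Set.ncard_le_ncard (Set.union_subset ?_ ?_)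
  · exact fun C hC => ⟨hC.1, hC.2.1, hC.2.2.trans Set.subset_union_left⟩
  · exact fun C hC => ⟨hC.1, hC.2.1, hC.2.2.trans Set.subset_union_right⟩

lemma contractionCount_add_add_le (hAB : Disjoint A B) (hAC : Disjoint A C) (hBC : Disjoint B C)
    (hP : A ∪ B ∪ C ⊆ P) :
    contractionCount con i A + contractionCount con i B + contractionCount con i C ≤
      contractionCount con i P :=
  calc _ ≤ contractionCount con i (A ∪ B) + contractionCount con i C :=
        Nat.add_le_add_right (contractionCount_add_le_union hAB) _
    _ ≤ contractionCount con i (A ∪ B ∪ C) :=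
        contractionCount_add_le_union (Set.disjoint_union_left.mpr ⟨hAC, hBC⟩)
    _ ≤ contractionCount con i P := contractionCount_mono hP

lemma contractionCount_le_sum_ncard :
    contractionCount con i P ≤ ∑ j ∈ Finset.range i, (con (j + 1)).ncard :=
  Finset.sum_le_sum fun _ _ => Set.ncard_le_ncard (Set.sep_subset _ _)

end contractionCount

namespace ContractionSeq

variable [Fintype V] {G : SimpleGraph V} {a b c i : ℕ} {P : Set V}

lemma exists_part_subset_of_mem (cs : ContractionSeq G a b c) (hi : i < b)
    (hP : P ∈ cs.Ps (i + 1)) {w : V} (hw : w ∈ P) : ∃ D ∈ cs.Ps i, D ⊆ P ∧ w ∈ D := by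
  obtain ⟨D, hD, hwD⟩ := (cs.ispart i hi.le).1 w
  obtain ⟨Q, hQ, hDQ⟩ := cs.refines i hi D hD
  obtain rfl : Q = P := by
    by_contra hne
    exact Set.disjoint_left.mp ((cs.ispart (i + 1) hi).2.1 Q hQ P hP hne) (hDQ hwD) hw
  exact ⟨D, hD, hDQ, hwD⟩

lemma exists_center_of_mem_con (cs : ContractionSeq G a b 1) (hi : i < b)
    (hP : P ∈ cs.con (i + 1)) :
    ∃ D₀ ∈ cs.Ps i, D₀ ⊆ P ∧
      ∀ D ∈ cs.Ps i, D ⊆ P → D ≠ D₀ → ∃ x ∈ D₀, ∃ y ∈ D, G.Adj x y := by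
  obtain ⟨D₀, h₀, hradius⟩ := cs.contracted i hi P hP
  refine ⟨D₀, h₀.1, h₀.2, fun D hD hDP hne => ?_⟩
  obtain ⟨p, hp⟩ := hradius D ⟨hD, hDP⟩
  have hlen : p.length = 1 := by
    have : p.length ≠ 0 := fun h0 => hne (congrArg Subtype.val (p.eq_of_length_eq_zero h0)).symm
    omega
  obtain ⟨-, x, hx, y, hy, hxy⟩ := p.adj_of_length_eq_one hlen
  exact ⟨x, hx, y, hy, hxy⟩

-- Measuring against `D \ D₀` makes the bound vanish when `w` already lies in the centre.
lemma exists_walk_to_center (cs : ContractionSeq G a b c) (hi : i < b) {D₀ D : Set V}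
    (hD₀ : D₀ ∈ cs.Ps i) (hD : D ∈ cs.Ps i)
    (hjoined : JoinedWithin G D (2 * contractionCount cs.con i D))
    (hadj : D ≠ D₀ → ∃ x ∈ D₀, ∃ y ∈ D, G.Adj x y) {w : V} (hw : w ∈ D) :
    ∃ x ∈ D₀, ∃ p : G.Walk w x, p.length ≤ 2 * contractionCount cs.con i (D \ D₀) + 1 := by
  by_cases hD₀D : D = D₀
  · exact ⟨w, hD₀D ▸ hw, .nil, Nat.zero_le _⟩
  · obtain ⟨x, hx, y, hy, hxy⟩ := hadj hD₀D
    obtain ⟨p, hp⟩ := hjoined w hw y hy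
    rw [((cs.ispart i hi.le).2.1 D hD D₀ hD₀ hD₀D).sdiff_eq_left]
    exact ⟨x, hx, p.concat hxy.symm, by rw [SimpleGraph.Walk.length_concat]; omega⟩

lemma joinedWithin_of_mem_con (cs : ContractionSeq G a b 1) (hi : i < b)
    (ih : ∀ D ∈ cs.Ps i, JoinedWithin G D (2 * contractionCount cs.con i D))
    (hP : P ∈ cs.con (i + 1)) :
    JoinedWithin G P (2 * contractionCount cs.con (i + 1) P) := by
  obtain ⟨D₀, hD₀, hD₀P, hadj⟩ := cs.exists_center_of_mem_con hi hP
  have reach : ∀ w ∈ P, ∃ D ∈ cs.Ps i, D ⊆ P ∧ w ∈ D ∧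
      ∃ x ∈ D₀, ∃ p : G.Walk w x, p.length ≤ 2 * contractionCount cs.con i (D \ D₀) + 1 := by
    intro w hw
    obtain ⟨D, hD, hDP, hwD⟩ := cs.exists_part_subset_of_mem hi (cs.con_sub i hi hP) hw
    exact ⟨D, hD, hDP, hwD,
      cs.exists_walk_to_center hi hD₀ hD (ih D hD) (hadj D hD hDP) hwD⟩
  have hnew : 1 ≤ {C ∈ cs.con (i + 1) | C.Nonempty ∧ C ⊆ P}.ncard := by
    obtain ⟨D, hD⟩ := (cs.ispart i hi.le).2.2 D₀ hD₀
    exact (Set.ncard_pos (Set.toFinite _)).mpr ⟨P, hP, ⟨D, hD₀P hD⟩, subset_rfl⟩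
  intro u hu v hv
  obtain ⟨Du, hDu, hDuP, huDu, x, hx, p, hp⟩ := reach u hu
  obtain ⟨Dv, hDv, hDvP, hvDv, y, hy, q, hq⟩ := reach v hv
  rw [contractionCount_succ]
  by_cases huv : Du = Dv
  · subst huv
    obtain ⟨r, hr⟩ := ih Du hDu u huDu v hvDv
    exact ⟨r, hr.trans (by have := contractionCount_mono (con := cs.con) (i := i) hDuP; omega)⟩
  · obtain ⟨r, hr⟩ := ih D₀ hD₀ x hx y hy
    have hcount := contractionCount_add_add_le (con := cs.con) (i := i) (P := P)
      Set.disjoint_sdiff_left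
      (((cs.ispart i hi.le).2.1 Du hDu Dv hDv huv).mono Set.sdiff_subset Set.sdiff_subset)
      Set.disjoint_sdiff_right
      (Set.union_subset (Set.union_subset (Set.sdiff_subset.trans hDuP) hD₀P)
        (Set.sdiff_subset.trans hDvP))
    refine ⟨p.append (r.append q.reverse), ?_⟩
    simp only [SimpleGraph.Walk.length_append, SimpleGraph.Walk.length_reverse]
    omega

lemma joinedWithin_of_mem_Ps (cs : ContractionSeq G a b 1) :
    ∀ i ≤ b, ∀ P ∈ cs.Ps i, JoinedWithin G P (2 * contractionCount cs.con i P)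
  | 0, _, P, hP => by
    rw [cs.bot] at hP
    obtain ⟨v, rfl⟩ := hP
    exact joinedWithin_singleton G v _
  | i + 1, hi, P, hP => by
    have ih := cs.joinedWithin_of_mem_Ps i (by omega)
    by_cases hcon : P ∈ cs.con (i + 1)
    · exact cs.joinedWithin_of_mem_con (by omega) ih hcon
    · refine (ih P (cs.old_parts i (by omega) P hP hcon)).mono ?_
      rw [contractionCount_succ]
      omega

end ContractionSeq

theorem statement_8_general {V : Type} [Fintype V] (H : SimpleGraph V)
    (a b : ℕ) (cs : ContractionSeq H a b 1) :
    ∀ u v : V, ∃ p : H.Walk u v, p.length ≤ 2 * a := by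
  have huniv : JoinedWithin H Set.univ (2 * contractionCount cs.con b Set.univ) :=
    cs.joinedWithin_of_mem_Ps b le_rfl Set.univ (by rw [cs.top]; rfl)
  have hcount : contractionCount cs.con b Set.univ ≤ a :=
    contractionCount_le_sum_ncard.trans cs.count
  intro u v
  exact (huniv.mono (by omega)) u trivial v trivial

/-- If a connected unweighted graph `H` admits an `(a,b,1)`-contraction
sequence, then its hop-diameter is at most `2·a`: any two vertices are joined by a walk
of length at most `2·a`. -/
theorem statement_8 {V : Type} [Fintype V] (H : SimpleGraph V) (hH : H.Connected)
    (a b : ℕ) (cs : ContractionSeq H a b 1) :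
    ∀ u v : V, ∃ p : H.Walk u v, p.length ≤ 2 * a :=
  statement_8_general H a b cs

end Paper
end
end

section
/- If a connected unweighted graph G admits an (a,b,c)-contraction sequence for integers a, b, c ≥ 1, then G admits an (ac, bc, 1)-contraction sequence. -/
/-!
A contraction of radius `c` is split into `c` contractions of radius one. Inside a contracted
part `P`, give every old part its distance in the quotient graph from a centre of `P`; this
level is at most `c`. The `k`-th sub-step lets the ball of level `< k` around the centre
absorb the old parts of level `k`: each of them is adjacent to a part of smaller level, which
already lies in the ball, so the sub-step has radius one. Every sub-step contracts at most as
many parts as the original step, so the total count grows at most by the factor `c`.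
-/

open scoped BigOperators

noncomputable section

namespace Paper

variable {V : Type}

namespace IsPartition

variable {Ps : Set (Set V)}

lemma exists_mem (h : IsPartition Ps) (v : V) : ∃ P ∈ Ps, v ∈ P := h.1 v

lemma nonempty (h : IsPartition Ps) {P : Set V} (hP : P ∈ Ps) : P.Nonempty := h.2.2 P hP

lemma eq_of_mem_of_mem (h : IsPartition Ps) {P P' : Set V} (hP : P ∈ Ps) (hP' : P' ∈ Ps)
    {v : V} (hv : v ∈ P) (hv' : v ∈ P') : P = P' := by
  by_contra hne
  exact Set.disjoint_left.mp (h.2.1 P hP P' hP' hne) hv hv'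

end IsPartition

def QuotRadiusLE (G : SimpleGraph V) (S : Set (Set V)) (c : ℕ) : Prop :=
  ∃ D₀ : Set V, ∃ h₀ : D₀ ∈ S, ∀ D : Set V, ∀ hD : D ∈ S,
    ∃ wlk : (quotGraph G S).Walk ⟨D₀, h₀⟩ ⟨D, hD⟩, wlk.length ≤ c

lemma quotRadiusLE_one_of_adj {G : SimpleGraph V} {S : Set (Set V)} {D₀ : Set V}
    (h₀ : D₀ ∈ S) (hadj : ∀ D ∈ S, D ≠ D₀ → ∃ u ∈ D₀, ∃ v ∈ D, G.Adj u v) :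
    QuotRadiusLE G S 1 := by
  refine ⟨D₀, h₀, fun D hD => ?_⟩
  by_cases hD₀ : D = D₀
  · subst hD₀
    exact ⟨.nil, zero_le_one⟩
  · have hne : (⟨D₀, h₀⟩ : S) ≠ ⟨D, hD⟩ := fun h => hD₀ (congrArg Subtype.val h).symm
    exact ⟨.cons ⟨hne, hadj D hD hD₀⟩ .nil, le_rfl⟩

structure IsLevelFunction (G : SimpleGraph V) (c : ℕ) (S : Set (Set V)) (f : Set V → ℕ) :
    Prop where
  exists_center : ∃ D₀ ∈ S, ∀ D ∈ S, f D = 0 ↔ D = D₀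
  le : ∀ D ∈ S, f D ≤ c
  exists_adj_lt : ∀ D ∈ S, 0 < f D → ∃ D' ∈ S, f D' < f D ∧ ∃ u ∈ D', ∃ v ∈ D, G.Adj u v

lemma QuotRadiusLE.exists_isLevelFunction {G : SimpleGraph V} {S : Set (Set V)} {c : ℕ}
    (h : QuotRadiusLE G S c) : ∃ f, IsLevelFunction G c S f := by
  classical
  obtain ⟨D₀, h₀, hwalk⟩ := h
  let H := quotGraph G S
  have hdist : ∀ D (hD : D ∈ S), H.Reachable ⟨D₀, h₀⟩ ⟨D, hD⟩ := fun D hD =>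
    ⟨(hwalk D hD).choose⟩
  refine ⟨fun D => if hD : D ∈ S then H.dist ⟨D₀, h₀⟩ ⟨D, hD⟩ else 0, ⟨D₀, h₀, ?_⟩, ?_, ?_⟩
  · intro D hD
    simp only [dif_pos hD, (hdist D hD).dist_eq_zero_iff, Subtype.ext_iff, eq_comm]
  · intro D hD
    obtain ⟨w, hw⟩ := hwalk D hD
    simpa only [dif_pos hD] using (SimpleGraph.dist_le w).trans hw
  · intro D hD hpos
    simp only [dif_pos hD] at hpos ⊢
    -- the penultimate vertex of a shortest walk from the centre is one step closer
    obtain ⟨p, hp⟩ := (hdist D hD).exists_walk_length_eq_dist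
    have hx : H.Adj (p.getVert (p.length - 1)) ⟨D, hD⟩ := by
      have := p.adj_getVert_succ (i := p.length - 1) (by omega)
      rwa [Nat.sub_add_cancel (by omega), p.getVert_length] at this
    have hxdist : H.dist ⟨D₀, h₀⟩ (p.getVert (p.length - 1)) < H.dist ⟨D₀, h₀⟩ ⟨D, hD⟩ := by
      have := SimpleGraph.dist_le (p.take (p.length - 1))
      rw [p.take_length] at this
      omega
    generalize p.getVert (p.length - 1) = x at hx hxdist
    obtain ⟨D', hD'⟩ := x
    exact ⟨D', hD', by simpa only [dif_pos hD'] using hxdist, hx.2⟩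

structure IsContractionStep (G : SimpleGraph V) (c : ℕ) (Q Q' C : Set (Set V)) : Prop where
  isPartition : IsPartition Q
  isPartition' : IsPartition Q'
  refines : ∀ D ∈ Q, ∃ P ∈ Q', D ⊆ P
  subset : C ⊆ Q'
  mem_of_notMem : ∀ P ∈ Q', P ∉ C → P ∈ Q
  quotRadiusLE : ∀ P ∈ C, QuotRadiusLE G {D | D ∈ Q ∧ D ⊆ P} c

lemma ContractionSeq.isContractionStep [Fintype V] {G : SimpleGraph V} {a b c : ℕ}
    (cs : ContractionSeq G a b c) {i : ℕ} (hi : i < b) :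
    IsContractionStep G c (cs.Ps i) (cs.Ps (i + 1)) (cs.con (i + 1)) :=
  ⟨cs.ispart i hi.le, cs.ispart (i + 1) hi, cs.refines i hi, cs.con_sub i hi,
    cs.old_parts i hi, cs.contracted i hi⟩

open Classical in
def level (G : SimpleGraph V) (c : ℕ) (Q : Set (Set V)) (P : Set V) : Set V → ℕ :=
  if h : ∃ f, IsLevelFunction G c {D | D ∈ Q ∧ D ⊆ P} f then h.choose else fun _ => 0

def levelBall (G : SimpleGraph V) (c : ℕ) (Q : Set (Set V)) (P : Set V) (k : ℕ) : Set V :=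
  {v | ∃ D, (D ∈ Q ∧ D ⊆ P) ∧ level G c Q P D ≤ k ∧ v ∈ D}

/-- The partition reached after growing every contracted part `P ∈ C` only up to its ball
of radius `k` around the centre of `P`. -/
def layer (G : SimpleGraph V) (c : ℕ) (Q C : Set (Set V)) (k : ℕ) : Set (Set V) :=
  {X | X ∈ Q ∧ ∀ P ∈ C, X ⊆ P → k < level G c Q P X} ∪ (fun P => levelBall G c Q P k) '' C

section levelBall

variable {G : SimpleGraph V} {c : ℕ} {Q : Set (Set V)} {P : Set V}

lemma levelBall_subset (k : ℕ) : levelBall G c Q P k ⊆ P := by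
  rintro v ⟨D, ⟨-, hDP⟩, -, hv⟩
  exact hDP hv

lemma levelBall_mono {k l : ℕ} (hkl : k ≤ l) : levelBall G c Q P k ⊆ levelBall G c Q P l := by
  rintro v ⟨D, hD, hk, hv⟩
  exact ⟨D, hD, hk.trans hkl, hv⟩

lemma mem_levelBall_iff (hQ : IsPartition Q) {D : Set V} (hD : D ∈ Q) {v : V} (hv : v ∈ D)
    {k : ℕ} : v ∈ levelBall G c Q P k ↔ D ⊆ P ∧ level G c Q P D ≤ k := by
  constructor
  · rintro ⟨D', ⟨hD', hD'P⟩, hk, hv'⟩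
    obtain rfl := hQ.eq_of_mem_of_mem hD hD' hv hv'
    exact ⟨hD'P, hk⟩
  · rintro ⟨hDP, hk⟩
    exact ⟨D, ⟨hD, hDP⟩, hk, hv⟩

end levelBall

namespace IsContractionStep

variable {G : SimpleGraph V} {c : ℕ} {Q Q' C : Set (Set V)} (h : IsContractionStep G c Q Q' C)
include h

lemma isLevelFunction_level {P : Set V} (hP : P ∈ C) :
    IsLevelFunction G c {D | D ∈ Q ∧ D ⊆ P} (level G c Q P) := by
  have hex := (h.quotRadiusLE P hP).exists_isLevelFunction
  rw [level, dif_pos hex]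
  exact hex.choose_spec

lemma subset_of_mem_of_mem {D P : Set V} (hD : D ∈ Q) (hP : P ∈ Q') {v : V} (hvD : v ∈ D)
    (hvP : v ∈ P) : D ⊆ P := by
  obtain ⟨P', hP', hDP'⟩ := h.refines D hD
  rwa [h.isPartition'.eq_of_mem_of_mem hP hP' hvP (hDP' hvD)]

lemma exists_mem_subset {P : Set V} (hP : P ∈ Q') {v : V} (hv : v ∈ P) :
    ∃ D ∈ Q, D ⊆ P ∧ v ∈ D := by
  obtain ⟨D, hD, hvD⟩ := h.isPartition.exists_mem v
  exact ⟨D, hD, h.subset_of_mem_of_mem hD hP hvD hv, hvD⟩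

lemma eq_of_mem_levelBall {P P' : Set V} (hP : P ∈ C) (hP' : P' ∈ C) {k l : ℕ} {v : V}
    (hv : v ∈ levelBall G c Q P k) (hv' : v ∈ levelBall G c Q P' l) : P = P' :=
  h.isPartition'.eq_of_mem_of_mem (h.subset hP) (h.subset hP') (levelBall_subset k hv)
    (levelBall_subset l hv')

lemma levelBall_zero_eq {P D : Set V} (hP : P ∈ C) (hD : D ∈ Q) (hDP : D ⊆ P)
    (h0 : level G c Q P D = 0) : levelBall G c Q P 0 = D := by
  obtain ⟨D₀, -, hcentre⟩ := (h.isLevelFunction_level hP).exists_center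
  have hDD₀ := (hcentre D ⟨hD, hDP⟩).mp h0
  ext v
  constructor
  · rintro ⟨D', hD', hk, hv⟩
    rwa [hDD₀, ← (hcentre D' hD').mp (Nat.le_zero.mp hk)]
  · intro hv
    exact ⟨D, ⟨hD, hDP⟩, h0.le, hv⟩

lemma levelBall_zero_mem {P : Set V} (hP : P ∈ C) : levelBall G c Q P 0 ∈ Q := by
  obtain ⟨D₀, hD₀, hcentre⟩ := (h.isLevelFunction_level hP).exists_center
  rw [h.levelBall_zero_eq hP hD₀.1 hD₀.2 ((hcentre D₀ hD₀).mpr rfl)]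
  exact hD₀.1

lemma levelBall_nonempty {P : Set V} (hP : P ∈ C) (k : ℕ) : (levelBall G c Q P k).Nonempty :=
  (h.isPartition.nonempty (h.levelBall_zero_mem hP)).mono (levelBall_mono k.zero_le)

lemma levelBall_self {P : Set V} (hP : P ∈ C) : levelBall G c Q P c = P := by
  refine (levelBall_subset c).antisymm fun v hv => ?_
  obtain ⟨D, hD, hDP, hvD⟩ := h.exists_mem_subset (h.subset hP) hv
  exact ⟨D, ⟨hD, hDP⟩, (h.isLevelFunction_level hP).le D ⟨hD, hDP⟩, hvD⟩


lemma isPartition_layer (k : ℕ) : IsPartition (layer G c Q C k) := by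
  classical
  refine ⟨fun v => ?_, ?_, ?_⟩
  · obtain ⟨D, hD, hvD⟩ := h.isPartition.exists_mem v
    by_cases hin : ∃ P ∈ C, D ⊆ P ∧ level G c Q P D ≤ k
    · obtain ⟨P, hP, hDP, hk⟩ := hin
      exact ⟨_, Or.inr ⟨P, hP, rfl⟩, D, ⟨hD, hDP⟩, hk, hvD⟩
    · push Not at hin
      exact ⟨D, Or.inl ⟨hD, hin⟩, hvD⟩
  · have key : ∀ X ∈ Q, (∀ P ∈ C, X ⊆ P → k < level G c Q P X) →
        ∀ P ∈ C, Disjoint X (levelBall G c Q P k) := by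
      intro X hX hXlev P hP
      refine Set.disjoint_left.mpr fun v hvX hvB => ?_
      obtain ⟨hXP, hk⟩ := (mem_levelBall_iff h.isPartition hX hvX).mp hvB
      exact (hXlev P hP hXP).not_ge hk
    rintro X (⟨hX, hXlev⟩ | ⟨P, hP, rfl⟩) Y (⟨hY, hYlev⟩ | ⟨P', hP', rfl⟩) hne
    · exact h.isPartition.2.1 X hX Y hY hne
    · exact key X hX hXlev P' hP'
    · exact (key Y hY hYlev P hP).symm
    · refine Set.disjoint_left.mpr fun v hv hv' => hne ?_
      rw [h.eq_of_mem_levelBall hP hP' hv hv']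
  · rintro X (⟨hX, -⟩ | ⟨P, hP, rfl⟩)
    · exact h.isPartition.nonempty hX
    · exact h.levelBall_nonempty hP k

lemma layer_zero : layer G c Q C 0 = Q := by
  ext X
  constructor
  · rintro (⟨hX, -⟩ | ⟨P, hP, rfl⟩)
    · exact hX
    · exact h.levelBall_zero_mem hP
  · intro hX
    by_cases hzero : ∃ P ∈ C, X ⊆ P ∧ level G c Q P X = 0
    · obtain ⟨P, hP, hXP, h0⟩ := hzero
      exact Or.inr ⟨P, hP, h.levelBall_zero_eq hP hX hXP h0⟩
    · push Not at hzero
      exact Or.inl ⟨hX, fun P hP hXP => Nat.pos_of_ne_zero (hzero P hP hXP)⟩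

lemma layer_self : layer G c Q C c = Q' := by
  ext X
  constructor
  · rintro (⟨hX, hXlev⟩ | ⟨P, hP, rfl⟩)
    · obtain ⟨P, hP, hXP⟩ := h.refines X hX
      have hPC : P ∉ C := fun hPC =>
        ((h.isLevelFunction_level hPC).le X ⟨hX, hXP⟩).not_gt (hXlev P hPC hXP)
      obtain ⟨v, hv⟩ := h.isPartition.nonempty hX
      rwa [h.isPartition.eq_of_mem_of_mem hX (h.mem_of_notMem P hP hPC) hv (hXP hv)]
    · simpa only [h.levelBall_self hP] using h.subset hP
  · intro hX
    by_cases hXC : X ∈ C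
    · exact Or.inr ⟨X, hXC, h.levelBall_self hXC⟩
    · refine Or.inl ⟨h.mem_of_notMem X hX hXC, fun P hP hXP => absurd ?_ hXC⟩
      obtain ⟨v, hv⟩ := h.isPartition'.nonempty hX
      rwa [h.isPartition'.eq_of_mem_of_mem hX (h.subset hP) hv (hXP hv)]

/-- Passing from radius `k` to radius `k + 1` only absorbs parts of `Q` at level `k + 1`,
each adjacent to a part of level at most `k`, so it is a contraction of radius one. -/
lemma isContractionStep_layer (k : ℕ) :
    IsContractionStep G 1 (layer G c Q C k) (layer G c Q C (k + 1))
      ((fun P => levelBall G c Q P (k + 1)) '' C) := by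
  classical
  refine ⟨h.isPartition_layer k, h.isPartition_layer (k + 1), ?_, Set.subset_union_right,
    ?_, ?_⟩
  · rintro X (⟨hX, hXlev⟩ | ⟨P, hP, rfl⟩)
    · by_cases hnext : ∃ P ∈ C, X ⊆ P ∧ level G c Q P X = k + 1
      · obtain ⟨P, hP, hXP, hlev⟩ := hnext
        exact ⟨_, Or.inr ⟨P, hP, rfl⟩, fun v hv => ⟨X, ⟨hX, hXP⟩, hlev.le, hv⟩⟩
      · push Not at hnext
        refine ⟨X, Or.inl ⟨hX, fun P hP hXP => ?_⟩, subset_rfl⟩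
        exact lt_of_le_of_ne (hXlev P hP hXP) (hnext P hP hXP).symm
    · exact ⟨_, Or.inr ⟨P, hP, rfl⟩, levelBall_mono k.le_succ⟩
  · rintro X (⟨hX, hXlev⟩ | hXC) hXnot
    · exact Or.inl ⟨hX, fun P hP hXP => (hXlev P hP hXP).trans' k.lt_succ_self⟩
    · exact absurd hXC hXnot
  · rintro _ ⟨P, hP, rfl⟩
    refine quotRadiusLE_one_of_adj ⟨Or.inr ⟨P, hP, rfl⟩, levelBall_mono k.le_succ⟩ ?_
    rintro X ⟨hX | ⟨P', hP', rfl⟩, hXsub⟩ hne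
    · obtain ⟨hXQ, hXlev⟩ := hX
      obtain ⟨v, hv⟩ := h.isPartition.nonempty hXQ
      obtain ⟨hXP, hle⟩ := (mem_levelBall_iff h.isPartition hXQ hv).mp (hXsub hv)
      have hlev : level G c Q P X = k + 1 := le_antisymm hle (hXlev P hP hXP)
      obtain ⟨D', ⟨hD', hD'P⟩, hlt, u, hu, w, hw, huw⟩ :=
        (h.isLevelFunction_level hP).exists_adj_lt X ⟨hXQ, hXP⟩ (by omega)
      exact ⟨u, ⟨D', ⟨hD', hD'P⟩, by omega, hu⟩, w, hw, huw⟩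
    · obtain ⟨v, hv⟩ := h.levelBall_nonempty hP' k
      exact absurd (by rw [h.eq_of_mem_levelBall hP hP' (hXsub hv) hv]) hne

end IsContractionStep

lemma sum_range_mul_eq_sum_sum {M : Type*} [AddCommMonoid M] (f : ℕ → M) (b n : ℕ) :
    ∑ j ∈ Finset.range (b * n), f j =
      ∑ i ∈ Finset.range b, ∑ k ∈ Finset.range n, f (n * i + k) := by
  induction b with
  | zero => simp
  | succ b ih => rw [Nat.succ_mul, Finset.sum_range_add, ih, Finset.sum_range_succ, mul_comm b n]

lemma ContractionSeq.nonempty_of_subdivision [Fintype V] {G : SimpleGraph V} {a b c n d : ℕ}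
    (cs : ContractionSeq G a b c) (hn : 0 < n) (L K : ℕ → ℕ → Set (Set V))
    (hL₀ : ∀ i < b, L i 0 = cs.Ps i) (hLn : ∀ i < b, L i n = cs.Ps (i + 1))
    (hstep : ∀ i < b, ∀ k < n, IsContractionStep G d (L i k) (L i (k + 1)) (K i k))
    (hcard : ∀ i < b, ∀ k < n, (K i k).ncard ≤ (cs.con (i + 1)).ncard) :
    Nonempty (ContractionSeq G (a * n) (b * n) d) := by
  classical
  let Ps : ℕ → Set (Set V) := fun j => if n ∣ j then cs.Ps (j / n) else L (j / n) (j % n)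
  let con : ℕ → Set (Set V) := fun j => K ((j - 1) / n) ((j - 1) % n)
  have hPs_mul (i : ℕ) : Ps (n * i) = cs.Ps i := by
    simp only [Ps, if_pos (dvd_mul_right n i), Nat.mul_div_cancel_left i hn]
  have hPs (i : ℕ) (hi : i < b) (k : ℕ) (hk : k ≤ n) : Ps (n * i + k) = L i k := by
    rcases hk.lt_or_eq with hk | rfl
    · rcases k.eq_zero_or_pos with rfl | hk₀
      · rw [add_zero, hPs_mul, hL₀ i hi]
      · have hndvd : ¬ n ∣ n * i + k := fun hdvd =>
          Nat.not_dvd_of_pos_of_lt hk₀ hk ((Nat.dvd_add_right (dvd_mul_right n i)).mp hdvd)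
        simp only [Ps, if_neg hndvd, Nat.mul_add_div hn, Nat.div_eq_of_lt hk, add_zero,
          Nat.mul_add_mod, Nat.mod_eq_of_lt hk]
    · rw [← Nat.mul_succ, hPs_mul, hLn i hi]
  have hcon (i k : ℕ) (hk : k < n) : con (n * i + k + 1) = K i k := by
    simp only [con, Nat.add_sub_cancel, Nat.mul_add_div hn, Nat.div_eq_of_lt hk, add_zero,
      Nat.mul_add_mod, Nat.mod_eq_of_lt hk]
  have hstep' (j : ℕ) (hj : j < b * n) :
      IsContractionStep G d (Ps j) (Ps (j + 1)) (con (j + 1)) := by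
    have hi : j / n < b := (Nat.div_lt_iff_lt_mul hn).mpr hj
    have hk : j % n < n := Nat.mod_lt j hn
    rw [← Nat.div_add_mod j n, hcon _ _ hk, add_assoc, hPs _ hi _ hk.le, hPs _ hi _ hk]
    exact hstep _ hi _ hk
  refine ⟨⟨Ps, con, fun j hj => ?_, ?_, ?_, fun j hj => (hstep' j hj).refines,
    fun j hj => (hstep' j hj).subset, fun j hj => (hstep' j hj).mem_of_notMem,
    fun j hj => (hstep' j hj).quotRadiusLE, ?_⟩⟩
  · rcases hj.lt_or_eq with hj | rfl
    · exact (hstep' j hj).isPartition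
    · rw [mul_comm, hPs_mul]
      exact cs.ispart b le_rfl
  · simpa only [← hPs_mul 0, mul_zero] using cs.bot
  · rw [mul_comm, hPs_mul]
    exact cs.top
  · calc ∑ j ∈ Finset.range (b * n), (con (j + 1)).ncard
        = ∑ i ∈ Finset.range b, ∑ k ∈ Finset.range n, (K i k).ncard := by
          rw [sum_range_mul_eq_sum_sum]
          refine Finset.sum_congr rfl fun i _ => Finset.sum_congr rfl fun k hk => ?_
          rw [hcon i k (Finset.mem_range.mp hk)]
      _ ≤ ∑ i ∈ Finset.range b, n * (cs.con (i + 1)).ncard := by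
          refine Finset.sum_le_sum fun i hi => ?_
          simpa using Finset.sum_le_sum fun k hk =>
            hcard i (Finset.mem_range.mp hi) k (Finset.mem_range.mp hk)
      _ ≤ a * n := by
          rw [← Finset.mul_sum, mul_comm a]
          exact Nat.mul_le_mul_left n cs.count

theorem statement_11_general {V : Type} [Fintype V] (G : SimpleGraph V)
    (a b c : ℕ) (hc : 1 ≤ c)
    (cs : ContractionSeq G a b c) :
    Nonempty (ContractionSeq G (a * c) (b * c) 1) :=
  cs.nonempty_of_subdivision hc (fun i => layer G c (cs.Ps i) (cs.con (i + 1)))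
    (fun i k => (fun P => levelBall G c (cs.Ps i) P (k + 1)) '' cs.con (i + 1))
    (fun _ hi => (cs.isContractionStep hi).layer_zero)
    (fun _ hi => (cs.isContractionStep hi).layer_self)
    (fun _ hi k _ => (cs.isContractionStep hi).isContractionStep_layer k)
    (fun _ _ _ _ => Set.ncard_image_le (Set.toFinite _))

/-- If a connected unweighted graph admits an `(a,b,c)`-contraction
sequence for integers `a, b, c ≥ 1`, then it admits an `(a·c, b·c, 1)`-contraction
sequence. -/
theorem statement_11 {V : Type} [Fintype V] (G : SimpleGraph V) (hG : G.Connected)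
    (a b c : ℕ) (ha : 1 ≤ a) (hb : 1 ≤ b) (hc : 1 ≤ c)
    (cs : ContractionSeq G a b c) :
    Nonempty (ContractionSeq G (a * c) (b * c) 1) :=
  statement_11_general G a b c hc cs

end Paper
end
end

section
/- Let T be a finite rooted tree and let a set of its nodes be designated as heavy (the remaining nodes being light), such that the root is heavy, no leaf is heavy, and the parent of every heavy non-root node is heavy. Call a node minimal heavy if it is heavy and all its children are light, and maximal light if it is light and its parent is heavy. Let M₁ be the set of minimal heavy nodes, let M₂ be the set of maximal light nodes whose parent is not minimal heavy, and let M = M₁ ∪ M₂. Then every root-to-leaf path of T contains exactly one node of M. -/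
namespace Paper

/-- The set of children of `x` in the rooted tree given by the parent function `par`
(the root is its own parent, and is not a child of itself). -/
def children {ι : Type} (par : ι → ι) (x : ι) : Set ι := {y | par y = x ∧ y ≠ x}

/-- A node is a leaf if it has no children. -/
def IsLeafNode {ι : Type} (par : ι → ι) (x : ι) : Prop := children par x = ∅

/-- A heavy node all of whose children are light. -/
def MinimalHeavy {ι : Type} (par : ι → ι) (heavy : ι → Prop) (x : ι) : Prop :=
  heavy x ∧ ∀ y ∈ children par x, ¬ heavy y

/-- A light node whose parent is heavy. -/
def MaximalLight {ι : Type} (par : ι → ι) (heavy : ι → Prop) (x : ι) : Prop :=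
  ¬ heavy x ∧ heavy (par x)

/-- `M = M₁ ∪ M₂`: minimal heavy nodes, together with maximal light nodes whose
parent is not minimal heavy. -/
def Mset {ι : Type} (par : ι → ι) (heavy : ι → Prop) : Set ι :=
  {x | MinimalHeavy par heavy x} ∪
    {x | MaximalLight par heavy x ∧ ¬ MinimalHeavy par heavy (par x)}

/-- In a finite rooted tree with a heavy/light marking such that the
root is heavy, no leaf is heavy, and the parent of every heavy non-root node is heavy,
every root-to-leaf path contains exactly one node of `M`.  (The rooted tree is encoded
by a parent function `par` with a root satisfying `par root = root`, every node having
an iterated parent equal to the root; the nodes on the root-to-leaf path ending at a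
leaf `z` are exactly the iterated parents of `z`.) -/
theorem statement_12 {ι : Type} [Fintype ι]
    (par : ι → ι) (root : ι) (hroot : par root = root)
    (hreach : ∀ x : ι, ∃ n : ℕ, par^[n] x = root)
    (heavy : ι → Prop)
    (hrootheavy : heavy root)
    (hleaflight : ∀ x : ι, IsLeafNode par x → ¬ heavy x)
    (hheavypar : ∀ x : ι, heavy x → x ≠ root → heavy (par x)) :
    ∀ z : ι, IsLeafNode par z →
      ∃! m : ι, (∃ n : ℕ, par^[n] z = m) ∧ m ∈ Mset par heavy := by
  classical
  intro z hz
  have heavy_par : ∀ x, heavy x → heavy (par x) := by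
    intro x hx
    by_cases h : x = root
    · rw [h, hroot]; exact hrootheavy
    · exact hheavypar x hx h
  have heavy_iter : ∀ (n : ℕ) (x : ι), heavy x → heavy (par^[n] x) := by
    intro n x hx
    induction n with
    | zero => exact hx
    | succ n ih => rw [Function.iterate_succ_apply']; exact heavy_par _ ih
  have hex : ∃ n, heavy (par^[n] z) := by
    obtain ⟨n, hn⟩ := hreach z
    exact ⟨n, hn ▸ hrootheavy⟩
  set k := Nat.find hex with hkdef
  have hkheavy : heavy (par^[k] z) := Nat.find_spec hex
  have hlt : ∀ n, n < k → ¬ heavy (par^[n] z) := fun n hn => Nat.find_min hex hn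
  have hzlight : ¬ heavy z := hleaflight z hz
  have hkpos : 0 < k := by
    rcases Nat.eq_zero_or_pos k with h | h
    · exact absurd (by simpa [h] using hkheavy) hzlight
    · exact h
  have hge : ∀ n, k ≤ n → heavy (par^[n] z) := by
    intro n hn
    obtain ⟨m, rfl⟩ := Nat.exists_eq_add_of_le hn
    rw [add_comm, Function.iterate_add_apply]
    exact heavy_iter m _ hkheavy
  have hparl : par (par^[k-1] z) = par^[k] z := by
    rw [← Function.iterate_succ_apply' par (k-1) z]
    congr 1
    omega
  have hllight : ¬ heavy (par^[k-1] z) := hlt _ (Nat.pred_lt hkpos.ne')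
  -- any minimal heavy node on the path above level k equals par^[k] z
  have hminuniq : ∀ m : ℕ, MinimalHeavy par heavy (par^[k+m] z) → par^[k+m] z = par^[k] z := by
    intro m
    induction m with
    | zero => intro _; rfl
    | succ m ih =>
      intro hmin
      by_cases hcase : par^[k+m] z = par^[k+(m+1)] z
      · rw [← hcase] at hmin ⊢; exact ih hmin
      · exfalso
        apply hmin.2 (par^[k+m] z) _ (hge _ (Nat.le_add_right k m))
        refine ⟨?_, hcase⟩
        rw [← Function.iterate_succ_apply' par (k+m) z]
        congr 1
  -- a maximal-light node on the path must be par^[k-1] z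
  have hmaxlight : ∀ n : ℕ, ¬ heavy (par^[n] z) → heavy (par (par^[n] z)) → n = k - 1 := by
    intro n hn hpn
    have h1 : n < k := by
      by_contra h
      exact hn (hge n (le_of_not_gt h))
    have h2 : k ≤ n + 1 := by
      by_contra h
      exact (hlt (n+1) (lt_of_not_ge h)) (by rwa [Function.iterate_succ_apply'])
    omega
  by_cases hminh : MinimalHeavy par heavy (par^[k] z)
  · refine ⟨par^[k] z, ⟨⟨k, rfl⟩, Or.inl hminh⟩, ?_⟩
    rintro m ⟨⟨n, rfl⟩, hM⟩
    rcases hM with hmin | ⟨⟨hml1, hml2⟩, hnotmin⟩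
    · rcases Nat.lt_or_ge n k with h1 | h1
      · exact absurd hmin.1 (hlt n h1)
      · obtain ⟨m, rfl⟩ := Nat.exists_eq_add_of_le h1
        exact hminuniq m hmin
    · have := hmaxlight n hml1 hml2
      subst this
      rw [hparl] at hnotmin
      exact absurd hminh hnotmin
  · refine ⟨par^[k-1] z, ⟨⟨k-1, rfl⟩, Or.inr ⟨⟨hllight, hparl ▸ hkheavy⟩, hparl ▸ hminh⟩⟩, ?_⟩
    rintro m ⟨⟨n, rfl⟩, hM⟩
    rcases hM with hmin | ⟨⟨hml1, hml2⟩, _⟩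
    · rcases Nat.lt_or_ge n k with h1 | h1
      · exact absurd hmin.1 (hlt n h1)
      · obtain ⟨m, rfl⟩ := Nat.exists_eq_add_of_le h1
        exact absurd (hminuniq m hmin ▸ hmin) hminh
    · rw [hmaxlight n hml1 hml2]


end Paper
end

section
/- Let T be a finite rooted tree and call a node branching if it has at least two children; let a be the total number of branching nodes of T and let b ≥ 1 be an integer. Then the number of nodes v of T such that the subtree rooted at v contains at least b branching nodes while, for every child u of v, the subtree rooted at u contains fewer than b branching nodes, is at most a/b. -/
namespace Paper

/-- A node is branching if it has at least two children. -/
def IsBranching {ι : Type} (par : ι → ι) (x : ι) : Prop := 2 ≤ (children par x).ncard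

/-- The number of branching nodes in the subtree rooted at `v`. -/
noncomputable def branchWeight {ι : Type} (par : ι → ι) (v : ι) : ℕ :=
  {x : ι | (∃ n : ℕ, par^[n] x = v) ∧ IsBranching par x}.ncard

lemma exists_child_ancestor {ι : Type} (par : ι → ι) :
    ∀ (k : ℕ) (v w : ι), par^[k] v = w → v ≠ w →
      ∃ u, par u = w ∧ u ≠ w ∧ ∃ j : ℕ, par^[j] v = u := by
  intro k
  induction k with
  | zero => intro v w h hne; exact absurd h hne
  | succ k ih =>
    intro v w h hne
    rw [Function.iterate_succ_apply'] at h
    by_cases h0 : par^[k] v = w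
    · exact ih v w h0 hne
    · exact ⟨par^[k] v, h, h0, k, rfl⟩

lemma branchWeight_mono {ι : Type} [Fintype ι] (par : ι → ι) {v u : ι} {j : ℕ}
    (hj : par^[j] v = u) : branchWeight par v ≤ branchWeight par u := by
  apply Set.ncard_le_ncard _ (Set.toFinite _)
  rintro x ⟨⟨n, hn⟩, hx⟩
  exact ⟨⟨j + n, by rw [Function.iterate_add_apply, hn, hj]⟩, hx⟩

/-- In a finite rooted tree with `a` branching nodes, for any integer
`b ≥ 1`, the number of nodes `v` whose rooted subtree contains at least `b` branching
nodes while every child's subtree contains fewer than `b` branching nodes is at most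
`a / b`. -/
theorem statement_13 {ι : Type} [Fintype ι]
    (par : ι → ι) (root : ι) (hroot : par root = root)
    (hreach : ∀ x : ι, ∃ n : ℕ, par^[n] x = root)
    (b : ℕ) (hb : 1 ≤ b) :
    (({v : ι | b ≤ branchWeight par v ∧
        ∀ u ∈ children par v, branchWeight par u < b}).ncard : ℝ)
      ≤ ({x : ι | IsBranching par x}.ncard : ℝ) / b := by
  classical
  set S : Set ι := {v : ι | b ≤ branchWeight par v ∧
      ∀ u ∈ children par v, branchWeight par u < b} with hSdef
  set B : Set ι := {x : ι | IsBranching par x} with hBdef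
  let F : ι → Finset ι := fun v =>
    {x : ι | (∃ n : ℕ, par^[n] x = v) ∧ IsBranching par x}.toFinset
  have hcard : ∀ v ∈ S, b ≤ (F v).card := by
    intro v hv
    have := hv.1
    rwa [branchWeight, Set.ncard_eq_toFinset_card'] at this
  -- Key: if subtrees of v ≠ w intersect, contradiction with minimality.
  have key : ∀ v ∈ S, ∀ w ∈ S, v ≠ w → ∀ k : ℕ, par^[k] v ≠ w := by
    intro v hv w hw hne k hk
    obtain ⟨u, hu, hune, j, hj⟩ := exists_child_ancestor par k v w hk hne
    have h1 : b ≤ branchWeight par u := le_trans hv.1 (branchWeight_mono par hj)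
    have h2 : branchWeight par u < b := hw.2 u ⟨hu, hune⟩
    omega
  have hdisj : ∀ v ∈ S.toFinset, ∀ w ∈ S.toFinset, v ≠ w → Disjoint (F v) (F w) := by
    intro v hv w hw hne
    rw [Set.mem_toFinset] at hv hw
    rw [Finset.disjoint_left]
    intro x hxv hxw
    rw [Set.mem_toFinset] at hxv hxw
    obtain ⟨⟨n, hn⟩, _⟩ := hxv
    obtain ⟨⟨m, hm⟩, _⟩ := hxw
    rcases le_total n m with h | h
    · have : par^[m - n] v = w := by
        rw [← hn, ← Function.iterate_add_apply, Nat.sub_add_cancel h, hm]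
      exact key v hv w hw hne _ this
    · have : par^[n - m] w = v := by
        rw [← hm, ← Function.iterate_add_apply, Nat.sub_add_cancel h, hn]
      exact key w hw v hv hne.symm _ this
  have hsub : S.toFinset.biUnion F ⊆ B.toFinset := by
    intro x hx
    rw [Finset.mem_biUnion] at hx
    obtain ⟨v, _, hxv⟩ := hx
    rw [Set.mem_toFinset] at hxv ⊢
    exact hxv.2
  have hmain : b * S.ncard ≤ B.ncard := by
    rw [Set.ncard_eq_toFinset_card' S, Set.ncard_eq_toFinset_card' B]
    calc b * S.toFinset.card = ∑ v ∈ S.toFinset, b := by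
          rw [Finset.sum_const, smul_eq_mul, mul_comm]
      _ ≤ ∑ v ∈ S.toFinset, (F v).card :=
          Finset.sum_le_sum (fun v hv => hcard v (Set.mem_toFinset.mp hv))
      _ = (S.toFinset.biUnion F).card := (Finset.card_biUnion hdisj).symm
      _ ≤ B.toFinset.card := Finset.card_le_card hsub
  have hb' : (0 : ℝ) < b := by exact_mod_cast hb
  rw [le_div_iff₀ hb']
  exact_mod_cast (mul_comm b S.ncard ▸ hmain)
end Paper
end

section
/- There is a universal constant c such that for all integers p, q ≥ 2, the pq × pq grid graph (the Cartesian box product of two path graphs on pq vertices each) admits a (⌈c · p² · (q + log₂ p)⌉, ⌈c · (q + log₂ p)⌉, 1)-contraction sequence. (Together with the treewidth bound for contraction sequences, this shows the bound tw(G) = O(√(ab)·c) for graphs with an (a,b,c)-contraction sequence is asymptotically optimal.) -/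
/-!
Cut the grid into `p²` blocks of side `q`. During the first `2q - 2` steps a ball grows from the
corner of every block, one layer per step, until it fills the block; each new layer is adjacent
to the ball, so every step contracts one star of radius one per block. Then, in `⌈log₂ p⌉` steps,
neighbouring block columns are merged in pairs, and afterwards the block rows likewise. This takes
`2q - 2 + 2⌈log₂ p⌉ ≤ 2(q + log₂ p)` steps, each contracting at most `p²` parts.
-/

open scoped BigOperators

noncomputable section

namespace Paper

variable {V : Type}

variable {X Y α β γ : Type*}

open SimpleGraph

def fibers (f : V → α) : Set (Set V) := Set.range fun v => f ⁻¹' {f v}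

lemma preimage_singleton_apply_eq_iff {f : V → α} {u v : V} :
    f ⁻¹' {f u} = f ⁻¹' {f v} ↔ f u = f v :=
  ⟨fun h => (h ▸ rfl : u ∈ f ⁻¹' {f v}), fun h => by rw [h]⟩

lemma isPartition_fibers (f : V → α) : IsPartition (fibers f) := by
  refine ⟨fun v => ⟨_, ⟨v, rfl⟩, rfl⟩, ?_, ?_⟩
  · rintro _ ⟨u, rfl⟩ _ ⟨v, rfl⟩ hne
    refine Set.disjoint_left.2 fun w hu hv => hne ?_
    exact preimage_singleton_apply_eq_iff.2 (hu.symm.trans hv)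
  · rintro _ ⟨v, rfl⟩
    exact ⟨v, rfl⟩

lemma exists_walk_length_le_one {G : SimpleGraph X} {x y : X} (h : x = y ∨ G.Adj x y) :
    ∃ w : G.Walk x y, w.length ≤ 1 := by
  rcases h with rfl | h
  · exact ⟨.nil, zero_le_one⟩
  · exact ⟨h.toWalk, le_rfl⟩

lemma ncard_fibers_diff_le [Finite V] {f : V → α} {g : V → β} (S : Finset α)
    (hS : ∀ v, f ⁻¹' {f v} ∉ fibers g → f v ∈ S) :
    (fibers f \ fibers g).ncard ≤ S.card := by
  have hsub : fibers f \ fibers g ⊆ (fun a => f ⁻¹' {a}) '' S := by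
    rintro _ ⟨⟨v, rfl⟩, hnew⟩
    exact ⟨f v, hS v hnew, rfl⟩
  calc (fibers f \ fibers g).ncard
      ≤ ((fun a => f ⁻¹' {a}) '' (S : Set α)).ncard := Set.ncard_le_ncard hsub (Set.toFinite _)
    _ ≤ S.card := (Set.ncard_image_le S.finite_toSet).trans (Set.ncard_coe_finset S).le

/-- In the quotient by `f`, the part of `u₀` is adjacent to every other part inside its `g`-fiber,
so contracting that fiber is a contraction of radius at most one. -/
def IsStarCoarsening (G : SimpleGraph X) (f : X → α) (g : X → β) : Prop :=
  ∀ v, ∃ u₀, g u₀ = g v ∧ ∀ u, g u = g v →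
    f u = f u₀ ∨ ∃ w w', f w = f u₀ ∧ f w' = f u ∧ G.Adj w w'

namespace IsStarCoarsening

variable {G : SimpleGraph X} {f : X → α} {g : X → β}

lemma refl (G : SimpleGraph X) (f : X → α) : IsStarCoarsening G f f :=
  fun v => ⟨v, rfl, fun _ hu => Or.inl hu⟩

lemma comp_injective (h : IsStarCoarsening G f g) {φ : α → γ} {ψ : β → γ}
    (hφ : φ.Injective) (hψ : ψ.Injective) : IsStarCoarsening G (φ ∘ f) (ψ ∘ g) := by
  intro v
  obtain ⟨u₀, hu₀, hstar⟩ := h v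
  refine ⟨u₀, congrArg ψ hu₀, fun u hu => ?_⟩
  simpa only [Function.comp_apply, hφ.eq_iff] using hstar u (hψ hu)

lemma boxProd_left {H : SimpleGraph Y} (h : IsStarCoarsening G f g) (k : Y → γ) :
    IsStarCoarsening (G.boxProd H) (Prod.map f k) (Prod.map g k) := by
  rintro ⟨x, y⟩
  obtain ⟨x₀, hx₀, hstar⟩ := h x
  refine ⟨(x₀, y), by simp [hx₀], fun ⟨x', y'⟩ hu => ?_⟩
  simp only [Prod.map, Prod.mk.injEq] at hu ⊢
  rcases hstar x' hu.1 with hx | ⟨w, w', hw, hw', hadj⟩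
  · exact Or.inl ⟨hx, hu.2⟩
  · exact Or.inr ⟨(w, y'), (w', y'), by simp [hw, hu.2], by simp [hw'],
      boxProd_adj.2 (Or.inl ⟨hadj, rfl⟩)⟩

lemma boxProd_right {H : SimpleGraph Y} (h : IsStarCoarsening G f g) (k : Y → γ) :
    IsStarCoarsening (H.boxProd G) (Prod.map k f) (Prod.map k g) := by
  rintro ⟨y, x⟩
  obtain ⟨x₀, hx₀, hstar⟩ := h x
  refine ⟨(y, x₀), by simp [hx₀], fun ⟨y', x'⟩ hu => ?_⟩
  simp only [Prod.map, Prod.mk.injEq] at hu ⊢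
  rcases hstar x' hu.2 with hx | ⟨w, w', hw, hw', hadj⟩
  · exact Or.inl ⟨hu.1, hx⟩
  · exact Or.inr ⟨(y', w), (y', w'), by simp [hw, hu.1], by simp [hw'],
      boxProd_adj.2 (Or.inr ⟨hadj, rfl⟩)⟩

end IsStarCoarsening

/-- The parts at step `i` are the fibers of `f i`; those contracted at step `i + 1` are the fibers
of `f (i + 1)` that are not fibers of `f i`. -/
def ContractionSeq.ofLabels [Fintype V] [Nonempty V] (G : SimpleGraph V) {a b : ℕ}
    (f : ℕ → V → α) (hinj : (f 0).Injective) (hconst : ∀ u v, f b u = f b v)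
    (hmono : ∀ i < b, ∀ u v, f i u = f i v → f (i + 1) u = f (i + 1) v)
    (hstar : ∀ i < b, IsStarCoarsening G (f i) (f (i + 1)))
    (hcount : ∑ i ∈ Finset.range b, (fibers (f (i + 1)) \ fibers (f i)).ncard ≤ a) :
    ContractionSeq G a b 1 where
  Ps i := fibers (f i)
  con i := fibers (f i) \ fibers (f (i - 1))
  ispart i _ := isPartition_fibers (f i)
  bot := by
    ext P
    have hsingleton : ∀ v, f 0 ⁻¹' {f 0 v} = {v} := fun v => by ext u; simp [hinj.eq_iff]
    simp only [fibers, Set.mem_range, hsingleton, eq_comm]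
    rfl
  top := by
    ext P
    simp only [fibers, Set.mem_range, Set.mem_singleton_iff]
    constructor
    · rintro ⟨v, rfl⟩
      exact Set.eq_univ_of_forall fun u => hconst u v
    · rintro rfl
      exact ⟨Classical.arbitrary V, Set.eq_univ_of_forall fun u => hconst u _⟩
  refines i hi := by
    rintro _ ⟨v, rfl⟩
    exact ⟨_, ⟨v, rfl⟩, fun u hu => hmono i hi u v hu⟩
  con_sub _ _ := Set.sdiff_subset
  old_parts i _ P hP hnew := by
    by_contra hold
    exact hnew ⟨hP, hold⟩
  contracted i hi := by
    rintro _ ⟨⟨v, rfl⟩, -⟩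
    obtain ⟨u₀, hu₀, hstar⟩ := hstar i hi v
    refine ⟨f i ⁻¹' {f i u₀}, ⟨⟨u₀, rfl⟩, fun w hw => (hmono i hi w u₀ hw).trans hu₀⟩, ?_⟩
    rintro _ ⟨⟨u, rfl⟩, hsub⟩
    apply exists_walk_length_le_one
    by_cases heq : f i u₀ = f i u
    · exact Or.inl (Subtype.ext (preimage_singleton_apply_eq_iff.2 heq))
    · obtain ⟨w, w', hw, hw', hadj⟩ := (hstar u (hsub rfl)).resolve_left (Ne.symm heq)
      refine Or.inr ⟨fun h => heq ?_, w, hw, w', hw', hadj⟩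
      exact preimage_singleton_apply_eq_iff.1 (congrArg Subtype.val h)
  count := by simpa only [Nat.add_sub_cancel] using hcount

lemma div_eq_div_of_dvd_of_div_eq {a b c d : ℕ} (hcd : c ∣ d) (h : a / c = b / c) :
    a / d = b / d := by
  obtain ⟨k, rfl⟩ := hcd
  simp only [← Nat.div_div_eq_div_mul, h]

section Grid

variable {n : ℕ}

lemma exists_pathGraph_adj_mod_pred {q : ℕ} (hq : 0 < q) {x : Fin n} (hx : 0 < (x : ℕ) % q) :
    ∃ x' : Fin n, (pathGraph n).Adj x' x ∧ (x' : ℕ) % q + 1 = x % q ∧ (x' : ℕ) / q = x / q := by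
  have hx' := Nat.div_add_mod x q
  have hdiv : ((x : ℕ) - 1) / q = x / q := by
    have := Nat.mod_lt x hq
    have h1 : (x : ℕ) / q * q = q * (x / q) := Nat.mul_comm _ _
    have h2 : ((x : ℕ) / q + 1) * q = q * (x / q) + q := by ring
    exact Nat.div_eq_of_lt_le (by omega) (by omega)
  refine ⟨⟨x - 1, by omega⟩, pathGraph_adj.2 (Or.inl (by simp; omega)), ?_, hdiv⟩
  have := Nat.div_add_mod (x - 1) q
  rw [hdiv] at this
  show ((x : ℕ) - 1) % q + 1 = x % q
  omega

lemma isStarCoarsening_pathGraph_div {c : ℕ} (hc : 0 < c) :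
    IsStarCoarsening (pathGraph n) (fun x : Fin n => (x : ℕ) / c)
      (fun x : Fin n => (x : ℕ) / (c * 2)) := by
  intro v
  have hcancel : ∀ j, c * j / c = j := fun j => Nat.mul_div_cancel_left j hc
  simp only [← Nat.div_div_eq_div_mul]
  set k := (v : ℕ) / c / 2 with hk
  have hv : c * (2 * k) ≤ v := (Nat.mul_le_mul_left c (by omega)).trans (Nat.mul_div_le _ _)
  refine ⟨⟨c * (2 * k), by omega⟩, by simp only [hcancel]; omega, fun u hu => ?_⟩
  have hhalf : (u : ℕ) / c = 2 * k ∨ (u : ℕ) / c = 2 * k + 1 := by omega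
  rcases hhalf with h | h
  · exact Or.inl (by simp only [h, hcancel])
  have hu : c * (2 * k + 1) ≤ u := h ▸ Nat.mul_div_le _ _
  have h1 : c * (2 * k + 1) = 2 * (c * k) + c := by ring
  have h2 : 2 * k * c = 2 * (c * k) := by ring
  have h3 : (2 * k + 1) * c = 2 * (c * k) + c := by ring
  refine Or.inr ⟨⟨c * (2 * k + 1) - 1, by omega⟩, ⟨c * (2 * k + 1), by omega⟩, ?_, ?_, ?_⟩
  · simp only [hcancel]
    exact Nat.div_eq_of_lt_le (by omega) (by omega)
  · simp only [hcancel, h]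
  · exact pathGraph_adj.2 (Or.inl (by simp; omega))

def cornerDist (q : ℕ) (v : Fin n × Fin n) : ℕ := v.1 % q + v.2 % q

lemma cornerDist_le {q : ℕ} (hq : 0 < q) (v : Fin n × Fin n) : cornerDist q v ≤ 2 * q - 2 := by
  have := Nat.mod_lt v.1 hq
  have := Nat.mod_lt v.2 hq
  unfold cornerDist
  omega

lemma exists_adj_cornerDist_pred {q : ℕ} (hq : 0 < q) {u : Fin n × Fin n}
    (hu : 0 < cornerDist q u) :
    ∃ w, ((pathGraph n).boxProd (pathGraph n)).Adj w u ∧ cornerDist q w + 1 = cornerDist q u ∧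
      (w.1 : ℕ) / q = u.1 / q ∧ (w.2 : ℕ) / q = u.2 / q := by
  unfold cornerDist at *
  rcases Nat.eq_zero_or_pos ((u.1 : ℕ) % q) with h | h
  · obtain ⟨y, hadj, hmod, hdiv⟩ := exists_pathGraph_adj_mod_pred hq (x := u.2) (by omega)
    exact ⟨(u.1, y), boxProd_adj.2 (Or.inr ⟨hadj, rfl⟩), by simp only; omega, rfl, hdiv⟩
  · obtain ⟨x, hadj, hmod, hdiv⟩ := exists_pathGraph_adj_mod_pred hq h
    exact ⟨(x, u.2), boxProd_adj.2 (Or.inl ⟨hadj, rfl⟩), by simp only; omega, hdiv, rfl⟩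

def blockLabel (q t a b : ℕ) (v : Fin n × Fin n) : (ℕ × ℕ) ⊕ (Fin n × Fin n) :=
  if cornerDist q v ≤ t then .inl ((v.1 : ℕ) / a, (v.2 : ℕ) / b) else .inr v

variable {q t a b : ℕ}

lemma blockLabel_eq_inr_iff {u v : Fin n × Fin n} :
    blockLabel q t a b u = .inr v ↔ u = v ∧ t < cornerDist q v := by
  unfold blockLabel
  split_ifs with h
  · simp only [false_iff, not_and, not_lt]
    rintro rfl
    exact h
  · simp only [Sum.inr.injEq]
    constructor
    · rintro rfl; exact ⟨rfl, by omega⟩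
    · exact And.left

lemma blockLabel_eq_inl_comp (h : ∀ v : Fin n × Fin n, cornerDist q v ≤ t) :
    blockLabel q t a b =
      Sum.inl ∘ Prod.map (fun x : Fin n => (x : ℕ) / a) (fun y : Fin n => (y : ℕ) / b) :=
  funext fun v => if_pos (h v)

lemma blockLabel_mono {t' a' b' : ℕ} (ht : t ≤ t') (ha : a ∣ a') (hb : b ∣ b')
    {u v : Fin n × Fin n} (h : blockLabel q t a b u = blockLabel q t a b v) :
    blockLabel q t' a' b' u = blockLabel q t' a' b' v := by
  by_cases hu : cornerDist q u ≤ t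
  · by_cases hv : cornerDist q v ≤ t
    · simp only [blockLabel, if_pos hu, if_pos hv, if_pos (hu.trans ht), if_pos (hv.trans ht),
        Sum.inl.injEq, Prod.mk.injEq] at h ⊢
      exact ⟨div_eq_div_of_dvd_of_div_eq ha h.1, div_eq_div_of_dvd_of_div_eq hb h.2⟩
    · rw [blockLabel, if_pos hu, (blockLabel_eq_inr_iff.2 ⟨rfl, not_le.1 hv⟩)] at h
      exact absurd h Sum.inl_ne_inr
  · rw [(blockLabel_eq_inr_iff.2 ⟨rfl, not_le.1 hu⟩), eq_comm, blockLabel_eq_inr_iff] at h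
    rw [h.1]

lemma blockLabel_zero_injective :
    (blockLabel q 0 q q : Fin n × Fin n → _).Injective := by
  intro u v h
  by_cases hu : cornerDist q u ≤ 0
  · by_cases hv : cornerDist q v ≤ 0
    · simp only [blockLabel, if_pos hu, if_pos hv, Sum.inl.injEq, Prod.mk.injEq] at h
      unfold cornerDist at hu hv
      have := Nat.div_add_mod u.1 q
      have := Nat.div_add_mod u.2 q
      have := Nat.div_add_mod v.1 q
      have := Nat.div_add_mod v.2 q
      ext <;> simp only [h] at * <;> omega
    · rw [blockLabel, if_pos hu, (blockLabel_eq_inr_iff.2 ⟨rfl, not_le.1 hv⟩)] at h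
      exact absurd h Sum.inl_ne_inr
  · rw [(blockLabel_eq_inr_iff.2 ⟨rfl, not_le.1 hu⟩), eq_comm, blockLabel_eq_inr_iff] at h
    exact h.1.symm

/-- A vertex joining the ball around its block corner is adjacent to a vertex already in it. -/
lemma isStarCoarsening_blockLabel_succ (hq : 0 < q) (t : ℕ) :
    IsStarCoarsening ((pathGraph n).boxProd (pathGraph n)) (blockLabel q t q q)
      (blockLabel q (t + 1) q q) := by
  intro v
  by_cases hv : cornerDist q v ≤ t + 1
  swap
  · refine ⟨v, rfl, fun u hu => ?_⟩
    rw [show blockLabel q (t + 1) q q v = .inr v from if_neg hv, blockLabel_eq_inr_iff] at hu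
    rw [hu.1]
    exact Or.inl rfl
  have hcorner : ∀ x : Fin n, q * (x / q) < n := fun x => (Nat.mul_div_le x q).trans_lt x.2
  let u₀ : Fin n × Fin n := (⟨_, hcorner v.1⟩, ⟨_, hcorner v.2⟩)
  have hu₀ : ∀ s, blockLabel q s q q u₀ = .inl ((v.1 : ℕ) / q, (v.2 : ℕ) / q) := by
    intro s
    simp [u₀, blockLabel, cornerDist, Nat.mul_div_cancel_left _ hq]
  refine ⟨u₀, by rw [hu₀, blockLabel, if_pos hv], fun u hu => ?_⟩
  have hu' : cornerDist q u ≤ t + 1 := by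
    by_contra h
    rw [(blockLabel_eq_inr_iff.2 ⟨rfl, not_le.1 h⟩), eq_comm, blockLabel_eq_inr_iff] at hu
    exact h (hu.1 ▸ hv)
  simp only [blockLabel, if_pos hu', if_pos hv, Sum.inl.injEq, Prod.mk.injEq] at hu
  rw [hu₀]
  by_cases hut : cornerDist q u ≤ t
  · exact Or.inl (by rw [blockLabel, if_pos hut, hu.1, hu.2])
  obtain ⟨w, hadj, hdist, hw⟩ := exists_adj_cornerDist_pred hq (u := u) (by omega)
  refine Or.inr ⟨w, u, ?_, rfl, hadj⟩
  rw [blockLabel, if_pos (by omega), hw.1, hw.2, hu.1, hu.2]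

lemma ncard_fibers_blockLabel_diff_le {p t' a' b' : ℕ} (hq : 0 < q) (hn : n ≤ p * q)
    (ha : q ≤ a) (hb : q ≤ b) (ht : t' ≤ t) :
    (fibers (blockLabel q t a b) \ fibers (blockLabel q t' a' b' : Fin n × Fin n → _)).ncard ≤
      p * p := by
  refine (ncard_fibers_diff_le ((Finset.range p ×ˢ Finset.range p).map
    (Function.Embedding.inl (β := Fin n × Fin n))) fun v hnew => ?_).trans (by simp)
  by_cases hv : cornerDist q v ≤ t
  · have hdiv : ∀ x : Fin n, ∀ {c}, q ≤ c → (x : ℕ) / c < p := fun x c hc =>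
      (Nat.div_le_div_left hc hq).trans_lt ((Nat.div_lt_iff_lt_mul hq).2 (x.2.trans_le hn))
    simp [blockLabel, if_pos hv, hdiv _ ha, hdiv _ hb]
  · have hsingle : ∀ {s c d}, s < cornerDist q v →
        blockLabel q s c d ⁻¹' {blockLabel q s c d v} = {v} := fun hs => by
      ext u
      simp [blockLabel_eq_inr_iff.2 ⟨rfl, hs⟩, blockLabel_eq_inr_iff, hs]
    exact absurd ⟨v, (hsingle (by omega)).trans (hsingle (by omega)).symm⟩ hnew

/-- For `t ≤ 2q - 2` the balls around the block corners grow until they fill the `q × q` blocks;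
during the next `L` steps the block columns are merged in pairs, during the following `L` steps
the block rows. -/
def gridLabel (q L t : ℕ) : Fin n × Fin n → (ℕ × ℕ) ⊕ (Fin n × Fin n) :=
  blockLabel q t (q * 2 ^ min (t - (2 * q - 2)) L) (q * 2 ^ min (t - (2 * q - 2) - L) L)

variable {L : ℕ}

lemma gridLabel_mono (t : ℕ) {u v : Fin n × Fin n} (h : gridLabel q L t u = gridLabel q L t v) :
    gridLabel q L (t + 1) u = gridLabel q L (t + 1) v :=
  blockLabel_mono t.le_succ (Nat.mul_dvd_mul_left q (Nat.pow_dvd_pow 2 (by omega)))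
    (Nat.mul_dvd_mul_left q (Nat.pow_dvd_pow 2 (by omega))) h

lemma gridLabel_of_le (ht : t ≤ 2 * q - 2) :
    (gridLabel q L t : Fin n × Fin n → _) = blockLabel q t q q := by
  simp [gridLabel, Nat.sub_eq_zero_of_le ht]

lemma gridLabel_add (hq : 0 < q) (e : ℕ) :
    gridLabel q L (2 * q - 2 + e) = Sum.inl ∘ Prod.map
      (fun x : Fin n => (x : ℕ) / (q * 2 ^ min e L))
      (fun y : Fin n => (y : ℕ) / (q * 2 ^ min (e - L) L)) := by
  rw [gridLabel, Nat.add_sub_cancel_left]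
  exact blockLabel_eq_inl_comp fun v => (cornerDist_le hq v).trans (Nat.le_add_right _ _)

lemma gridLabel_succ_of_le (hq : 0 < q) (ht : 2 * q - 2 + 2 * L ≤ t) :
    (gridLabel q L (t + 1) : Fin n × Fin n → _) = gridLabel q L t := by
  obtain ⟨e, rfl⟩ := Nat.exists_eq_add_of_le (le_of_add_le_left ht)
  rw [add_assoc, gridLabel_add hq, gridLabel_add hq]
  simp only [show min (e + 1) L = L by omega, show min e L = L by omega,
    show min (e + 1 - L) L = L by omega, show min (e - L) L = L by omega]

lemma gridLabel_eq_of_le (hq : 0 < q) (hn : n ≤ q * 2 ^ L) (ht : 2 * q - 2 + 2 * L ≤ t)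
    (v : Fin n × Fin n) : gridLabel q L t v = .inl (0, 0) := by
  obtain ⟨e, rfl⟩ := Nat.exists_eq_add_of_le (le_of_add_le_left ht)
  simp only [gridLabel_add hq, show min e L = L by omega, show min (e - L) L = L by omega,
    Function.comp_apply, Prod.map, Nat.div_eq_of_lt (v.1.2.trans_le hn),
    Nat.div_eq_of_lt (v.2.2.trans_le hn)]

lemma isStarCoarsening_gridLabel (hq : 0 < q) (t : ℕ) :
    IsStarCoarsening ((pathGraph n).boxProd (pathGraph n)) (gridLabel q L t)
      (gridLabel q L (t + 1)) := by
  rcases lt_or_ge t (2 * q - 2) with hball | hball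
  · rw [gridLabel_of_le hball.le, gridLabel_of_le hball]
    exact isStarCoarsening_blockLabel_succ hq t
  obtain ⟨e, rfl⟩ := Nat.exists_eq_add_of_le hball
  have hpos : ∀ e, 0 < q * 2 ^ e := fun e => by positivity
  rw [add_assoc, gridLabel_add hq, gridLabel_add hq]
  rcases lt_or_ge e L with hcol | hcol
  · simp only [show min (e + 1) L = e + 1 by omega, show min e L = e by omega,
      show e + 1 - L = e - L by omega, pow_succ, ← mul_assoc]
    exact ((isStarCoarsening_pathGraph_div (hpos _)).boxProd_left _).comp_injective
      Sum.inl_injective Sum.inl_injective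
  rcases lt_or_ge e (2 * L) with hrow | hrow
  · simp only [show min (e + 1) L = L by omega, show min e L = L by omega,
      show min (e + 1 - L) L = e - L + 1 by omega, show min (e - L) L = e - L by omega, pow_succ,
      ← mul_assoc]
    exact ((isStarCoarsening_pathGraph_div (hpos _)).boxProd_right _).comp_injective
      Sum.inl_injective Sum.inl_injective
  simp only [show min (e + 1) L = L by omega, show min e L = L by omega,
    show min (e + 1 - L) L = L by omega, show min (e - L) L = L by omega]
  exact .refl _ _

end Grid

lemma sum_range_le_mul_of_eq_zero {g : ℕ → ℕ} {b T N : ℕ} (hle : ∀ i, g i ≤ N)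
    (hzero : ∀ i, T ≤ i → g i = 0) : ∑ i ∈ Finset.range b, g i ≤ T * N :=
  calc ∑ i ∈ Finset.range b, g i
      ≤ ∑ i ∈ Finset.range T, g i := Finset.sum_le_sum_of_ne_zero fun i _ hi =>
        Finset.mem_range.2 (not_le.1 fun h => hi (hzero i h))
    _ ≤ (Finset.range T).card • N := Finset.sum_le_card_nsmul _ _ _ fun i _ => hle i
    _ = T * N := by rw [Finset.card_range, smul_eq_mul]

theorem nonempty_contractionSeq_grid {n p q L a b : ℕ} (hn : 0 < n) (hq : 0 < q)
    (hnp : n ≤ p * q) (hnL : n ≤ q * 2 ^ L) (hb : 2 * q - 2 + 2 * L ≤ b)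
    (ha : (2 * q - 2 + 2 * L) * (p * p) ≤ a) :
    Nonempty (ContractionSeq ((pathGraph n).boxProd (pathGraph n)) a b 1) := by
  have : Nonempty (Fin n × Fin n) := ⟨(⟨0, hn⟩, ⟨0, hn⟩)⟩
  refine ⟨ContractionSeq.ofLabels _ (gridLabel q L) ?_ ?_ (fun t _ _ _ => gridLabel_mono t)
    (fun t _ => isStarCoarsening_gridLabel hq t) ?_⟩
  · rw [gridLabel_of_le (Nat.zero_le _)]
    exact blockLabel_zero_injective
  · intro u v
    rw [gridLabel_eq_of_le hq hnL hb, gridLabel_eq_of_le hq hnL hb]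
  · refine (sum_range_le_mul_of_eq_zero (fun t => ?_) fun t ht => ?_).trans ha
    · exact ncard_fibers_blockLabel_diff_le hq hnp (Nat.le_mul_of_pos_right q (by positivity))
        (Nat.le_mul_of_pos_right q (by positivity)) t.le_succ
    · rw [gridLabel_succ_of_le hq ht, Set.sdiff_self, Set.ncard_empty]

lemma natCast_clog_lt_logb_add_one (b p : ℕ) : (Nat.clog b p : ℝ) < Real.logb b p + 1 := by
  have := Int.ceil_lt_add_one (Real.logb b p)
  rwa [Real.ceil_logb_natCast (Nat.cast_nonneg p), Int.clog_natCast, Int.cast_natCast] at this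

/-- There is a universal constant `c` such that for all integers
`p, q ≥ 2`, the `pq × pq` grid graph (box product of two paths on `p·q` vertices)
admits a `(⌈c·p²·(q + log₂ p)⌉, ⌈c·(q + log₂ p)⌉, 1)`-contraction sequence. -/
theorem statement_14 :
    ∃ c : ℝ, 0 < c ∧
      ∀ p q : ℕ, 2 ≤ p → 2 ≤ q →
        Nonempty (ContractionSeq
          (SimpleGraph.boxProd (SimpleGraph.pathGraph (p * q)) (SimpleGraph.pathGraph (p * q)))
          ⌈c * (p : ℝ) ^ 2 * ((q : ℝ) + Real.logb 2 p)⌉₊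
          ⌈c * ((q : ℝ) + Real.logb 2 p)⌉₊ 1) := by
  refine ⟨2, two_pos, fun p q hp hq => ?_⟩
  have hlog : (Nat.clog 2 p : ℝ) < Real.logb 2 p + 1 := by
    exact_mod_cast natCast_clog_lt_logb_add_one 2 p
  have hsteps : ((2 * q - 2 + 2 * Nat.clog 2 p : ℕ) : ℝ) ≤ 2 * ((q : ℝ) + Real.logb 2 p) := by
    push_cast [show 2 ≤ 2 * q by omega]
    linarith
  refine nonempty_contractionSeq_grid (L := Nat.clog 2 p) (by positivity) (by omega) le_rfl
    ?_ ?_ ?_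
  · rw [Nat.mul_comm]
    exact Nat.mul_le_mul_left q (Nat.le_pow_clog one_lt_two p)
  · exact_mod_cast hsteps.trans (Nat.le_ceil _)
  · have : (((2 * q - 2 + 2 * Nat.clog 2 p) * (p * p) : ℕ) : ℝ) ≤
        2 * (p : ℝ) ^ 2 * ((q : ℝ) + Real.logb 2 p) := by
      rw [Nat.cast_mul]
      calc _ ≤ 2 * ((q : ℝ) + Real.logb 2 p) * ((p * p : ℕ) : ℝ) :=
            mul_le_mul_of_nonneg_right hsteps (Nat.cast_nonneg _)
        _ = _ := by push_cast; ring
    exact_mod_cast this.trans (Nat.le_ceil _)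

end Paper
end
end
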